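/- arXiv:2410.19532 — 12 statements merged into one kernel-verified Lean document; each statement's English description precedes it below -/
import Mathlib

section
/- Let β₁ > β₂ be reals, γ₁, γ₂ ∈ ℝ with γ₁ + γ₂ = 1, and Ω₁, Ω₂ : ℝ² → ℝ. Suppose S₁, S₂ : ℝ → ℝ are differentiable and solve the SSISS system with these data. Set I(t) := 1 − S₁(t) − S₂(t) and X(t) := β₁S₁(t) + β₂S₂(t). Then for all t one has I'(t) = (X(t) − 1)·I(t) and X'(t) = λ·I(t) + (1 − I(t))·P(t) + X(t)·Q(t), where λ := β₁γ₁ + β₂γ₂, P(t) := β₁Ω₂(S₁(t),S₂(t)) + β₂Ω₁(S₁(t),S₂(t)) + β₁β₂·I(t), and Q(t) := −(Ω₁(S₁(t),S₂(t)) + Ω₂(S₁(t),S₂(t)) + (β₁+β₂)·I(t)). (In particular the transformed dynamical variables (X,I) obey a replacement number dynamics Ẋ = f(X,I), İ = (X−1)I.) -/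
/-- transforming an SSISS solution to the replacement number dynamics. -/
theorem stmt_0 (β₁ β₂ γ₁ γ₂ : ℝ) (hβ : β₁ > β₂) (hγ : γ₁ + γ₂ = 1)
    (Ω₁ Ω₂ : ℝ × ℝ → ℝ) (S₁ S₂ : ℝ → ℝ)
    (hS₁ : ∀ t : ℝ, HasDerivAt S₁
      ((γ₁ - β₁ * S₁ t) * (1 - S₁ t - S₂ t)
        - Ω₁ (S₁ t, S₂ t) * S₁ t + Ω₂ (S₁ t, S₂ t) * S₂ t) t)
    (hS₂ : ∀ t : ℝ, HasDerivAt S₂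
      ((γ₂ - β₂ * S₂ t) * (1 - S₁ t - S₂ t)
        - Ω₂ (S₁ t, S₂ t) * S₂ t + Ω₁ (S₁ t, S₂ t) * S₁ t) t) :
    ∀ t : ℝ,
      HasDerivAt (fun s => 1 - S₁ s - S₂ s)
        (((β₁ * S₁ t + β₂ * S₂ t) - 1) * (1 - S₁ t - S₂ t)) t ∧
      HasDerivAt (fun s => β₁ * S₁ s + β₂ * S₂ s)
        ((β₁ * γ₁ + β₂ * γ₂) * (1 - S₁ t - S₂ t)
          + (1 - (1 - S₁ t - S₂ t)) *
            (β₁ * Ω₂ (S₁ t, S₂ t) + β₂ * Ω₁ (S₁ t, S₂ t)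
              + β₁ * β₂ * (1 - S₁ t - S₂ t))
          + (β₁ * S₁ t + β₂ * S₂ t) *
            (-(Ω₁ (S₁ t, S₂ t) + Ω₂ (S₁ t, S₂ t)
              + (β₁ + β₂) * (1 - S₁ t - S₂ t)))) t := by
  intro t
  constructor
  · have h := ((hS₁ t).const_sub 1).sub (hS₂ t)
    refine h.congr_deriv (Eq.symm ?_)
    linear_combination (1 - S₁ t - S₂ t) * hγ
  · have h := ((hS₁ t).const_mul β₁).add ((hS₂ t).const_mul β₂)
    refine h.congr_deriv (Eq.symm ?_)
    ring
end

section
/- Let β₁ > β₂ and let f₀, f₁, f₂, P_f : ℝ → ℝ satisfy f₀(I) = (1−I)·P_f(I) + λ·I for all I, where λ := f₀(1). Define f(X,I) := f₀(I) + f₁(I)X + f₂(I)X², h_f(z,I) := P_f(I) + z·f₁(I) + z²·(I + (1−I)f₂(I)), A₁(I) := h_f(β₁,I)/(β₂−β₁), A₂(I) := h_f(β₂,I)/(β₁−β₂), B := f₂, γ₁ := (λ−β₂)/(β₁−β₂), γ₂ := (β₁−λ)/(β₁−β₂). Suppose X, I : ℝ → ℝ are differentiable with X'(t) = f(X(t),I(t))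 and I'(t) = (X(t)−1)·I(t) for all t. Then S₁ := (X−(1−I)β₂)/(β₁−β₂) and S₂ := (X−(1−I)β₁)/(β₂−β₁) satisfy I = 1−S₁−S₂, X = β₁S₁+β₂S₂, and solve the X² SSISS system: Sᵢ'(t) = (−βᵢSᵢ+γᵢ)·I − Aᵢ(I)·Sᵢ + Aⱼ(I)·Sⱼ − (βᵢ−βⱼ)·B(I)·S₁S₂ for {i,j} = {1,2}. -/
/-!
`S₁` and `S₂` are affine in `(X, I)`, so `S₁' = (X' + β₂ I') / (β₁ - β₂)`. Substituting the RND
equations `X' = f(X, I)`, `I' = (X - 1) I`, the decomposition `f₀(I) = (1 - I) P_f(I) + λ I`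
and the inverse change of variables `X = β₁ S₁ + β₂ S₂`, `I = 1 - S₁ - S₂` turns the required
equation into a polynomial identity. Since `S₂` is by definition `S₁` with `β₁` and `β₂`
exchanged, the equation for `S₂` is the one for `S₁` with the two strains swapped.
-/

/-- Reconstructed susceptible compartment `S₁` from the RND variables `(X, I)`. -/
noncomputable def S1fun (β₁ β₂ : ℝ) (X I : ℝ → ℝ) : ℝ → ℝ :=
  fun t => (X t - (1 - I t) * β₂) / (β₁ - β₂)

/-- Reconstructed susceptible compartment `S₂` from the RND variables `(X, I)`. -/
noncomputable def S2fun (β₁ β₂ : ℝ) (X I : ℝ → ℝ) : ℝ → ℝ :=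
  fun t => (X t - (1 - I t) * β₁) / (β₂ - β₁)

/-- Auxiliary function `h_f(z, I) = P_f(I) + z f₁(I) + z² (I + (1-I) f₂(I))`. -/
noncomputable def hfun (f₁ f₂ Pf : ℝ → ℝ) (z I : ℝ) : ℝ :=
  Pf I + z * f₁ I + z ^ 2 * (I + (1 - I) * f₂ I)

section SSISS

variable {β₁ β₂ : ℝ} {X I : ℝ → ℝ}

theorem one_sub_S1fun_sub_S2fun (hβ : β₁ ≠ β₂) (t : ℝ) :
    1 - S1fun β₁ β₂ X I t - S2fun β₁ β₂ X I t = I t := by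
  have : β₁ - β₂ ≠ 0 := sub_ne_zero.mpr hβ
  have : β₂ - β₁ ≠ 0 := sub_ne_zero.mpr hβ.symm
  simp only [S1fun, S2fun]
  field_simp
  ring

theorem mul_S1fun_add_mul_S2fun (hβ : β₁ ≠ β₂) (t : ℝ) :
    β₁ * S1fun β₁ β₂ X I t + β₂ * S2fun β₁ β₂ X I t = X t := by
  have : β₁ - β₂ ≠ 0 := sub_ne_zero.mpr hβ
  have : β₂ - β₁ ≠ 0 := sub_ne_zero.mpr hβ.symm
  simp only [S1fun, S2fun]
  field_simp
  ring

theorem hasDerivAt_S1fun {x' i' t : ℝ} (hX : HasDerivAt X x' t) (hI : HasDerivAt I i' t) :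
    HasDerivAt (S1fun β₁ β₂ X I) ((x' + i' * β₂) / (β₁ - β₂)) t := by
  have h := ((hX.sub (((hasDerivAt_const t (1 : ℝ)).sub hI).mul_const β₂)).div_const (β₁ - β₂))
  exact h.congr_deriv (by ring)

theorem hasDerivAt_S1fun_of_rnd (hβ : β₁ ≠ β₂) {f₀ f₁ f₂ Pf : ℝ → ℝ}
    (hP : ∀ I : ℝ, f₀ I = (1 - I) * Pf I + f₀ 1 * I) {t : ℝ}
    (hX : HasDerivAt X (f₀ (I t) + f₁ (I t) * X t + f₂ (I t) * X t ^ 2) t)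
    (hI : HasDerivAt I ((X t - 1) * I t) t) :
    HasDerivAt (S1fun β₁ β₂ X I)
      ((-β₁ * S1fun β₁ β₂ X I t + (f₀ 1 - β₂) / (β₁ - β₂)) * I t
        - hfun f₁ f₂ Pf β₁ (I t) / (β₂ - β₁) * S1fun β₁ β₂ X I t
        + hfun f₁ f₂ Pf β₂ (I t) / (β₁ - β₂) * S2fun β₁ β₂ X I t
        - (β₁ - β₂) * f₂ (I t) * (S1fun β₁ β₂ X I t * S2fun β₁ β₂ X I t)) t := by
  have : β₁ - β₂ ≠ 0 := sub_ne_zero.mpr hβ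
  have : β₂ - β₁ ≠ 0 := sub_ne_zero.mpr hβ.symm
  convert hasDerivAt_S1fun (β₁ := β₁) (β₂ := β₂) hX hI using 1
  simp only [S1fun, S2fun, hfun]
  rw [hP (I t)]
  field_simp
  ring

end SSISS

/-- an RND solution transforms back to an X² SSISS solution. -/
theorem stmt_1 (β₁ β₂ : ℝ) (hβ : β₁ > β₂) (f₀ f₁ f₂ Pf : ℝ → ℝ)
    (hP : ∀ I : ℝ, f₀ I = (1 - I) * Pf I + f₀ 1 * I)
    (X I : ℝ → ℝ)
    (hX : ∀ t : ℝ, HasDerivAt X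
      (f₀ (I t) + f₁ (I t) * X t + f₂ (I t) * X t ^ 2) t)
    (hI : ∀ t : ℝ, HasDerivAt I ((X t - 1) * I t) t) :
    ∀ t : ℝ,
      I t = 1 - S1fun β₁ β₂ X I t - S2fun β₁ β₂ X I t ∧
      X t = β₁ * S1fun β₁ β₂ X I t + β₂ * S2fun β₁ β₂ X I t ∧
      HasDerivAt (S1fun β₁ β₂ X I)
        ((-β₁ * S1fun β₁ β₂ X I t + (f₀ 1 - β₂) / (β₁ - β₂)) * I t
          - hfun f₁ f₂ Pf β₁ (I t) / (β₂ - β₁) * S1fun β₁ β₂ X I t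
          + hfun f₁ f₂ Pf β₂ (I t) / (β₁ - β₂) * S2fun β₁ β₂ X I t
          - (β₁ - β₂) * f₂ (I t) * (S1fun β₁ β₂ X I t * S2fun β₁ β₂ X I t)) t ∧
      HasDerivAt (S2fun β₁ β₂ X I)
        ((-β₂ * S2fun β₁ β₂ X I t + (β₁ - f₀ 1) / (β₁ - β₂)) * I t
          - hfun f₁ f₂ Pf β₂ (I t) / (β₁ - β₂) * S2fun β₁ β₂ X I t
          + hfun f₁ f₂ Pf β₁ (I t) / (β₂ - β₁) * S1fun β₁ β₂ X I t
          - (β₂ - β₁) * f₂ (I t) * (S1fun β₁ β₂ X I t * S2fun β₁ β₂ X I t)) t := by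
  intro t
  have hne : β₁ ≠ β₂ := hβ.ne'
  refine ⟨(one_sub_S1fun_sub_S2fun hne t).symm, (mul_S1fun_add_mul_S2fun hne t).symm,
    hasDerivAt_S1fun_of_rnd hne hP (hX t) (hI t), ?_⟩
  have h₂ := hasDerivAt_S1fun_of_rnd hne.symm hP (hX t) (hI t)
  have hγ : (f₀ 1 - β₁) / (β₂ - β₁) = (β₁ - f₀ 1) / (β₁ - β₂) := by
    rw [← neg_div_neg_eq, neg_sub, neg_sub]
  refine h₂.congr_deriv ?_
  rw [hγ]
  simp only [S1fun, S2fun]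
  ring
end

section
/- Let β₁ > β₂ and β₁' > β₂' be reals, and let g be the unique real 2×2 matrix whose column sums both equal 1 and which satisfies the row vector identity (β₁',β₂')·g = (β₁,β₂). Let T := {(S₁,S₂) ∈ ℝ² : S₁ ≥ 0, S₂ ≥ 0, S₁+S₂ ≤ 1}. Then g maps T into T (acting on column vectors) if and only if β₂' ≤ β₂ and β₁ ≤ β₁'. -/
/-!
A matrix maps the subsimplex `{S ≥ 0, ∑ S ≤ 1}` into itself iff its entries are nonnegative and
its column sums are at most `1`: the images of the vertices `eⱼ` are the columns, and the
conditions are preserved by convex combinations. Here the column sums are `1`, and solving the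
defining equations gives `(β₁' - β₂') • g = !![β₁ - β₂', β₂ - β₂'; β₁' - β₁, β₁' - β₂]`; since
`β₁ > β₂`, the diagonal entries are nonnegative as soon as the off-diagonal ones are.
-/

open Set Matrix

section Subsimplex

variable (ι R : Type*) [Fintype ι] [CommSemiring R] [PartialOrder R]

def subsimplex : Set (ι → R) := {S | (∀ i, 0 ≤ S i) ∧ ∑ i, S i ≤ 1}

variable {ι R}

theorem mapsTo_mulVec_subsimplex_iff [IsOrderedRing R] [DecidableEq ι] (g : Matrix ι ι R) :
    MapsTo g.mulVec (subsimplex ι R) (subsimplex ι R) ↔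
      (∀ i j, 0 ≤ g i j) ∧ ∀ j, ∑ i, g i j ≤ 1 := by
  constructor
  · intro H
    have hcol (j : ι) : g.mulVec (Pi.single j 1) ∈ subsimplex ι R :=
      H ⟨(Pi.single_nonneg.mpr zero_le_one : (0 : ι → R) ≤ Pi.single j 1), by simp⟩
    simp only [mulVec_single_one] at hcol
    exact ⟨fun i j => (hcol j).1 i, fun j => (hcol j).2⟩
  · rintro ⟨hg, hcol⟩ S ⟨hS, hSsum⟩
    refine ⟨fun i => Finset.sum_nonneg fun j _ => mul_nonneg (hg i j) (hS j), ?_⟩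
    calc ∑ i, g.mulVec S i = ∑ j, (∑ i, g i j) * S j := by
          simp only [mulVec, dotProduct, Finset.sum_mul]
          exact Finset.sum_comm
      _ ≤ ∑ j, S j := Finset.sum_le_sum fun j _ => mul_le_of_le_one_left (hS j) (hcol j)
      _ ≤ 1 := hSsum

theorem mem_subsimplex_fin_two {S : Fin 2 → R} :
    S ∈ subsimplex (Fin 2) R ↔ 0 ≤ S 0 ∧ 0 ≤ S 1 ∧ S 0 + S 1 ≤ 1 := by
  simp [subsimplex, Fin.forall_fin_two, Fin.sum_univ_two, and_assoc]

end Subsimplex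

theorem smul_eq_of_colSum_eq_one_of_vecMul {R : Type*} [CommRing R] {β₁ β₂ β₁' β₂' : R}
    {g : Matrix (Fin 2) (Fin 2) R}
    (hcol₁ : g 0 0 + g 1 0 = 1) (hcol₂ : g 0 1 + g 1 1 = 1)
    (hg : vecMul ![β₁', β₂'] g = ![β₁, β₂]) :
    (β₁' - β₂') • g = !![β₁ - β₂', β₂ - β₂'; β₁' - β₁, β₁' - β₂] := by
  have e₁ := congrFun hg 0
  have e₂ := congrFun hg 1
  simp only [vecMul, dotProduct, Fin.sum_univ_two, cons_val_zero, cons_val_one] at e₁ e₂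
  ext i j
  fin_cases i <;> fin_cases j <;>
    simp only [Matrix.smul_apply, smul_eq_mul, of_apply, cons_val', cons_val_zero, cons_val_one,
      empty_val', cons_val_fin_one, Fin.zero_eta, Fin.mk_one]
  · linear_combination e₁ - β₂' * hcol₁
  · linear_combination e₂ - β₂' * hcol₂
  · linear_combination β₁' * hcol₁ - e₁
  · linear_combination β₁' * hcol₂ - e₂

/-- `g` maps the physical triangle into itself iff
`β₂' ≤ β₂` and `β₁ ≤ β₁'`. -/
theorem stmt_3 (β₁ β₂ β₁' β₂' : ℝ) (h : β₁ > β₂) (h' : β₁' > β₂')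
    (g : Matrix (Fin 2) (Fin 2) ℝ)
    (hcol₁ : g 0 0 + g 1 0 = 1) (hcol₂ : g 0 1 + g 1 1 = 1)
    (hg : Matrix.vecMul ![β₁', β₂'] g = ![β₁, β₂]) :
    (∀ S : Fin 2 → ℝ, (0 ≤ S 0 ∧ 0 ≤ S 1 ∧ S 0 + S 1 ≤ 1) →
        (0 ≤ g.mulVec S 0 ∧ 0 ≤ g.mulVec S 1 ∧ g.mulVec S 0 + g.mulVec S 1 ≤ 1)) ↔
      (β₂' ≤ β₂ ∧ β₁ ≤ β₁') := by
  have hmaps := mapsTo_mulVec_subsimplex_iff g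
  simp only [MapsTo, mem_subsimplex_fin_two, Fin.forall_fin_two, Fin.sum_univ_two, hcol₁, hcol₂,
    le_refl, and_true] at hmaps
  rw [hmaps]
  have hd : 0 < β₁' - β₂' := sub_pos.mpr h'
  have hentry (i j : Fin 2) :
      0 ≤ g i j ↔ 0 ≤ !![β₁ - β₂', β₂ - β₂'; β₁' - β₁, β₁' - β₂] i j := by
    rw [← smul_eq_of_colSum_eq_one_of_vecMul hcol₁ hcol₂ hg, Matrix.smul_apply, smul_eq_mul,
      mul_nonneg_iff_of_pos_left hd]
  simp only [hentry, of_apply, cons_val', cons_val_zero, cons_val_one, empty_val',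
    cons_val_fin_one, sub_nonneg]
  constructor
  · rintro ⟨⟨-, hb₂⟩, hb₁, -⟩
    exact ⟨hb₂, hb₁⟩
  · rintro ⟨hb₂, hb₁⟩
    exact ⟨⟨by linarith, hb₂⟩, hb₁, by linarith⟩
end

section
/- Let β₁ > β₂, γ₁ ≥ 0, γ₂ ≥ 0, and let Ω₁, Ω₂ : ℝ² → ℝ be continuously differentiable with Ω₂(0,s) ≥ 0 and Ω₁(s,0) ≥ 0 for all s ∈ [0,1]. Let T := {(S₁,S₂) : S₁ ≥ 0, S₂ ≥ 0, S₁+S₂ ≤ 1}. If (S₁,S₂) : [0,T₀] → ℝ² is a solution of the SSISS system with (S₁(0),S₂(0)) ∈ T, then (S₁(t),S₂(t)) ∈ T for all t ∈ [0,T₀] (the physical triangle is forward invariant under admissible SSISS dynamics). -/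
set_option maxHeartbeats 1600000

open Set Filter

open Set Filter

lemma sq_min_hasDerivAt (x : ℝ) : HasDerivAt (fun y : ℝ => min y 0 ^ 2) (2 * min x 0) x := by
  rcases lt_trichotomy x 0 with hx | rfl | hx
  · have h : (fun y : ℝ => min y 0 ^ 2) =ᶠ[nhds x] fun y : ℝ => y ^ 2 := by
      filter_upwards [isOpen_Iio.eventually_mem (show x ∈ Iio (0:ℝ) from hx)] with y hy
      simp [min_eq_left (le_of_lt (mem_Iio.mp hy))]
    have : HasDerivAt (fun y : ℝ => y ^ 2) (2 * x) x := by
      simpa using hasDerivAt_pow 2 x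
    simpa [min_eq_left hx.le] using this.congr_of_eventuallyEq h
  · rw [hasDerivAt_iff_isLittleO]
    simp only [min_self, ne_eq, OfNat.ofNat_ne_zero, not_false_eq_true, zero_pow, sub_zero,
      smul_eq_mul, mul_zero, min_eq_right (le_refl (0:ℝ))]
    rw [Asymptotics.isLittleO_iff]
    intro c hc
    have hev : ∀ᶠ y : ℝ in nhds 0, |y| < c := by
      simpa using eventually_abs_sub_lt (0:ℝ) hc
    filter_upwards [hev] with y hy
    have h1 : min y 0 ^ 2 ≤ y ^ 2 := by
      rcases le_or_gt y 0 with h | h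
      · simp [min_eq_left h]
      · simp [min_eq_right h.le]; positivity
    have h2 : (0:ℝ) ≤ min y 0 ^ 2 := sq_nonneg _
    rw [Real.norm_eq_abs, Real.norm_eq_abs, abs_of_nonneg h2]
    nlinarith [abs_nonneg y, sq_abs y]
  · have h : (fun y : ℝ => min y 0 ^ 2) =ᶠ[nhds x] fun _ : ℝ => (0:ℝ) := by
      filter_upwards [isOpen_Ioi.eventually_mem (show x ∈ Ioi (0:ℝ) from hx)] with y hy
      simp [min_eq_right (le_of_lt (mem_Ioi.mp hy))]
    simpa [min_eq_right hx.le] using (hasDerivAt_const x (0:ℝ)).congr_of_eventuallyEq h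

lemma gron (T C : ℝ) (V V' : ℝ → ℝ)
    (hd : ∀ t ∈ Icc (0:ℝ) T, HasDerivAt V (V' t) t)
    (hb : ∀ t ∈ Icc (0:ℝ) T, V' t ≤ C * V t) :
    ∀ t ∈ Icc (0:ℝ) T, V t * Real.exp (-C * t) ≤ V 0 := by
  set W : ℝ → ℝ := fun t => V t * Real.exp (-C * t) with hW
  have hWd : ∀ t ∈ Icc (0:ℝ) T, HasDerivAt W
      (V' t * Real.exp (-C * t) + V t * (Real.exp (-C * t) * -C)) t := by
    intro t ht
    have h1 : HasDerivAt (fun s : ℝ => -C * s) (-C) t := by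
      simpa using (hasDerivAt_id t).const_mul (-C)
    exact (hd t ht).mul h1.exp
  have hA : AntitoneOn W (Icc (0:ℝ) T) := by
    apply antitoneOn_of_deriv_nonpos (convex_Icc 0 T)
    · exact fun s hs => (hWd s hs).continuousAt.continuousWithinAt
    · intro s hs
      rw [interior_Icc] at hs
      exact (hWd s (Ioo_subset_Icc_self hs)).differentiableAt.differentiableWithinAt
    · intro s hs
      rw [interior_Icc] at hs
      have hs' := Ioo_subset_Icc_self hs
      rw [(hWd s hs').deriv]
      have := hb s hs'
      nlinarith [Real.exp_pos (-C * s)]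
  intro t ht
  have h0 : (0:ℝ) ∈ Icc (0:ℝ) T := ⟨le_refl 0, le_trans ht.1 ht.2⟩
  have := hA h0 ht ht.1
  simpa [hW] using this


lemma key (γ β B M L a b w u : ℝ) (hB : 1 ≤ B) (ha : |a| ≤ B) (hb : |b| ≤ B)
    (hγ : 0 ≤ γ) (hL : 0 ≤ L) (hM : 0 ≤ M) (hw : |w| ≤ M) (hu : |u| ≤ M)
    (hbdry : a < 0 → 0 < b → L * (a + min (1 - a - b) 0) ≤ u) :
    min a 0 * ((γ - β * a) * (1 - a - b) - w * a + u * b) ≤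
      (γ + |β| * (1 + 2 * B) + 2 * M + 2 * L * B) *
        (min a 0 ^ 2 + min b 0 ^ 2 + min (1 - a - b) 0 ^ 2) := by
  have hβ0 : (0:ℝ) ≤ |β| := abs_nonneg β
  have hX : (0:ℝ) ≤ |β| * (1 + 2 * B) := by nlinarith
  have hY : (0:ℝ) ≤ 2 * L * B := by nlinarith
  have hLB : (0:ℝ) ≤ L * B := by nlinarith
  have hcoef : (0:ℝ) ≤ γ + |β| * (1 + 2 * B) + 2 * M + 2 * L * B := by nlinarith
  rcases le_or_gt 0 a with h | h
  · rw [min_eq_right h, zero_mul]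
    exact mul_nonneg hcoef (by positivity)
  · rw [min_eq_left h.le]
    generalize hI : 1 - a - b = i at *
    generalize hMm : min i 0 = m at *
    have hm0 : m ≤ 0 := hMm ▸ min_le_right _ _
    have hmi : m ≤ i := hMm ▸ min_le_left _ _
    have hiB : |i| ≤ 1 + 2 * B := by
      rw [abs_le] at ha hb ⊢
      constructor <;> nlinarith
    have habs := abs_le.mp ha
    have hbabs := abs_le.mp hb
    have hwabs := abs_le.mp hw
    have huabs := abs_le.mp hu
    have hiabs := abs_le.mp hiB
    have hβabs : -|β| ≤ β ∧ β ≤ |β| := ⟨neg_abs_le β, le_abs_self β⟩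
    have h1 : γ * (a * i) ≤ γ * (a ^ 2 + m ^ 2) := by
      have hai : a * i ≤ a * m := by nlinarith
      have ham : a * m ≤ a ^ 2 + m ^ 2 := by nlinarith [sq_nonneg (a + m)]
      exact mul_le_mul_of_nonneg_left (le_trans hai ham) hγ
    have h2 : -(β * (a ^ 2 * i)) ≤ |β| * (1 + 2 * B) * a ^ 2 := by
      have e2 : |β * (a ^ 2 * i)| = |β| * (a ^ 2 * |i|) := by
        rw [abs_mul, abs_mul, abs_of_nonneg (sq_nonneg a)]
      have e3 : a ^ 2 * |i| ≤ a ^ 2 * (1 + 2 * B) :=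
        mul_le_mul_of_nonneg_left hiB (sq_nonneg a)
      have e4 : |β| * (a ^ 2 * |i|) ≤ |β| * (a ^ 2 * (1 + 2 * B)) :=
        mul_le_mul_of_nonneg_left e3 hβ0
      calc -(β * (a ^ 2 * i)) ≤ |β * (a ^ 2 * i)| := neg_le_abs _
        _ = |β| * (a ^ 2 * |i|) := e2
        _ ≤ |β| * (a ^ 2 * (1 + 2 * B)) := e4
        _ = |β| * (1 + 2 * B) * a ^ 2 := by ring
    have h3 : -(w * a ^ 2) ≤ M * a ^ 2 := by
      have := mul_le_mul_of_nonneg_right (show -w ≤ M by linarith) (sq_nonneg a)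
      linarith
    have h4 : u * (a * b) ≤ M * (a ^ 2 + min b 0 ^ 2) + 2 * L * B * (a ^ 2 + m ^ 2) := by
      rcases le_or_gt b 0 with hb0 | hb0
      · rw [min_eq_left hb0]
        have hab : 0 ≤ a * b := by nlinarith
        have e1 : u * (a * b) ≤ M * (a * b) := by nlinarith
        have e2 : M * (a * b) ≤ M * (a ^ 2 + b ^ 2) := by
          have : a * b ≤ a ^ 2 + b ^ 2 := by nlinarith [sq_nonneg (a + b)]
          exact mul_le_mul_of_nonneg_left this hM
        have e3 : (0:ℝ) ≤ 2 * L * B * (a ^ 2 + m ^ 2) := by positivity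
        linarith
      · rw [min_eq_right hb0.le]
        have hbd := hbdry h hb0
        have hab : a * b ≤ 0 := by nlinarith
        have h5 : u * (a * b) ≤ L * (a + m) * (a * b) :=
          mul_le_mul_of_nonpos_right hbd hab
        have h6 : L * (a + m) * (a * b) = L * b * (a * a + m * a) := by ring
        have h7 : a * a + m * a ≤ a ^ 2 + (a ^ 2 + m ^ 2) / 2 := by
          nlinarith [sq_nonneg (a - m)]
        have h8 : (0:ℝ) ≤ L * b := mul_nonneg hL hb0.le
        have h9 : L * b * (a * a + m * a) ≤ L * b * (a ^ 2 + (a ^ 2 + m ^ 2) / 2) :=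
          mul_le_mul_of_nonneg_left h7 h8
        have h10 : L * b * (a ^ 2 + (a ^ 2 + m ^ 2) / 2) ≤
            L * B * (a ^ 2 + (a ^ 2 + m ^ 2) / 2) := by
          have e5 : (0:ℝ) ≤ a ^ 2 + (a ^ 2 + m ^ 2) / 2 := by positivity
          have e6 : L * b ≤ L * B := mul_le_mul_of_nonneg_left hbabs.2 hL
          exact mul_le_mul_of_nonneg_right e6 e5
        have h11 : L * B * (a ^ 2 + (a ^ 2 + m ^ 2) / 2) ≤ 2 * L * B * (a ^ 2 + m ^ 2) := by
          nlinarith [mul_nonneg hLB (sq_nonneg a), mul_nonneg hLB (sq_nonneg m)]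
        have h12 : (0:ℝ) ≤ M * (a ^ 2 + 0 ^ 2) := by positivity
        linarith
    have expand : a * ((γ - β * a) * i - w * a + u * b) =
        γ * (a * i) - β * (a ^ 2 * i) - w * a ^ 2 + u * (a * b) := by ring
    have hn2 : (0:ℝ) ≤ min b 0 ^ 2 := sq_nonneg _
    have hm2 : (0:ℝ) ≤ m ^ 2 := sq_nonneg _
    have ha2 : (0:ℝ) ≤ a ^ 2 := sq_nonneg _
    nlinarith [mul_nonneg hX hn2, mul_nonneg hX hm2, mul_nonneg hγ hn2,
      mul_nonneg hM hn2, mul_nonneg hM hm2, mul_nonneg hY hn2]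


/-- forward invariance of the physical triangle under admissible
SSISS dynamics. -/
theorem stmt_5 (β₁ β₂ γ₁ γ₂ : ℝ) (hβ : β₁ > β₂) (hγ₁ : 0 ≤ γ₁) (hγ₂ : 0 ≤ γ₂)
    (Ω₁ Ω₂ : ℝ × ℝ → ℝ) (hΩ₁ : ContDiff ℝ 1 Ω₁) (hΩ₂ : ContDiff ℝ 1 Ω₂)
    (hb₂ : ∀ s ∈ Set.Icc (0:ℝ) 1, 0 ≤ Ω₂ (0, s))
    (hb₁ : ∀ s ∈ Set.Icc (0:ℝ) 1, 0 ≤ Ω₁ (s, 0))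
    (T₀ : ℝ) (S₁ S₂ : ℝ → ℝ)
    (hS₁ : ∀ t ∈ Set.Icc (0:ℝ) T₀, HasDerivAt S₁
      ((γ₁ - β₁ * S₁ t) * (1 - S₁ t - S₂ t)
        - Ω₁ (S₁ t, S₂ t) * S₁ t + Ω₂ (S₁ t, S₂ t) * S₂ t) t)
    (hS₂ : ∀ t ∈ Set.Icc (0:ℝ) T₀, HasDerivAt S₂
      ((γ₂ - β₂ * S₂ t) * (1 - S₁ t - S₂ t)
        - Ω₂ (S₁ t, S₂ t) * S₂ t + Ω₁ (S₁ t, S₂ t) * S₁ t) t)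
    (h0 : 0 ≤ S₁ 0 ∧ 0 ≤ S₂ 0 ∧ S₁ 0 + S₂ 0 ≤ 1) :
    ∀ t ∈ Set.Icc (0:ℝ) T₀, 0 ≤ S₁ t ∧ 0 ≤ S₂ t ∧ S₁ t + S₂ t ≤ 1 := by
  -- continuity of the solution
  have hc₁ : ContinuousOn S₁ (Icc (0:ℝ) T₀) :=
    fun s hs => (hS₁ s hs).continuousAt.continuousWithinAt
  have hc₂ : ContinuousOn S₂ (Icc (0:ℝ) T₀) :=
    fun s hs => (hS₂ s hs).continuousAt.continuousWithinAt
  -- uniform bound on the trajectory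
  obtain ⟨B₁, hB₁⟩ := isCompact_Icc.exists_bound_of_continuousOn hc₁
  obtain ⟨B₂, hB₂⟩ := isCompact_Icc.exists_bound_of_continuousOn hc₂
  set B : ℝ := max 1 (max B₁ B₂) with hBdef
  have hB1 : (1:ℝ) ≤ B := le_max_left _ _
  have hB0 : (0:ℝ) ≤ B := by linarith
  have haB : ∀ s ∈ Icc (0:ℝ) T₀, |S₁ s| ≤ B := fun s hs =>
    le_trans (by simpa using hB₁ s hs) (le_trans (le_max_left _ _) (le_max_right _ _))
  have hbB : ∀ s ∈ Icc (0:ℝ) T₀, |S₂ s| ≤ B := fun s hs =>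
    le_trans (by simpa using hB₂ s hs) (le_trans (le_max_right _ _) (le_max_right _ _))
  -- the compact convex box
  set K : Set (ℝ × ℝ) := Icc (-B) B ×ˢ Icc (-B) B with hKdef
  have hKc : IsCompact K := isCompact_Icc.prod isCompact_Icc
  have hKconv : Convex ℝ K := (convex_Icc _ _).prod (convex_Icc _ _)
  have hpK : ∀ s ∈ Icc (0:ℝ) T₀, (S₁ s, S₂ s) ∈ K := by
    intro s hs
    exact ⟨abs_le.mp (haB s hs), abs_le.mp (hbB s hs)⟩
  -- bound on Ω on the box
  obtain ⟨M₁, hM₁⟩ := hKc.exists_bound_of_continuousOn (hΩ₁.continuous.continuousOn)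
  obtain ⟨M₂, hM₂⟩ := hKc.exists_bound_of_continuousOn (hΩ₂.continuous.continuousOn)
  set M : ℝ := max 0 (max M₁ M₂) with hMdef
  have hM0 : (0:ℝ) ≤ M := le_max_left _ _
  have hMa : ∀ p ∈ K, |Ω₁ p| ≤ M := fun p hp =>
    le_trans (by simpa using hM₁ p hp) (le_trans (le_max_left _ _) (le_max_right _ _))
  have hMb : ∀ p ∈ K, |Ω₂ p| ≤ M := fun p hp =>
    le_trans (by simpa using hM₂ p hp) (le_trans (le_max_right _ _) (le_max_right _ _))
  -- Lipschitz bound on the box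
  obtain ⟨L₁, hL₁⟩ := hKc.exists_bound_of_continuousOn
    ((hΩ₁.continuous_fderiv one_ne_zero).continuousOn (s := K))
  obtain ⟨L₂, hL₂⟩ := hKc.exists_bound_of_continuousOn
    ((hΩ₂.continuous_fderiv one_ne_zero).continuousOn (s := K))
  set L : ℝ := max 0 (max L₁ L₂) with hLdef
  have hL0 : (0:ℝ) ≤ L := le_max_left _ _
  have hL₁' : ∀ x ∈ K, ‖fderiv ℝ Ω₁ x‖ ≤ L := fun x hx =>
    le_trans (hL₁ x hx) (le_trans (le_max_left _ _) (le_max_right _ _))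
  have hL₂' : ∀ x ∈ K, ‖fderiv ℝ Ω₂ x‖ ≤ L := fun x hx =>
    le_trans (hL₂ x hx) (le_trans (le_max_right _ _) (le_max_right _ _))
  have hdist₁ : ∀ p ∈ K, ∀ q ∈ K, |Ω₁ p - Ω₁ q| ≤ L * dist p q := by
    intro p hp q hq
    have h := hKconv.norm_image_sub_le_of_norm_fderiv_le
      (fun x _ => (hΩ₁.differentiable one_ne_zero).differentiableAt) hL₁' hq hp
    rw [dist_eq_norm]
    simpa [Real.norm_eq_abs] using h
  have hdist₂ : ∀ p ∈ K, ∀ q ∈ K, |Ω₂ p - Ω₂ q| ≤ L * dist p q := by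
    intro p hp q hq
    have h := hKconv.norm_image_sub_le_of_norm_fderiv_le
      (fun x _ => (hΩ₂.differentiable one_ne_zero).differentiableAt) hL₂' hq hp
    rw [dist_eq_norm]
    simpa [Real.norm_eq_abs] using h
  -- the boundary inequalities needed by `key`
  have hbdry₁ : ∀ s ∈ Icc (0:ℝ) T₀, S₁ s < 0 → 0 < S₂ s →
      L * (S₁ s + min (1 - S₁ s - S₂ s) 0) ≤ Ω₂ (S₁ s, S₂ s) := by
    intro s hs ha hb
    set a := S₁ s; set b := S₂ s
    set m : ℝ := min (1 - a - b) 0 with hm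
    have hm0 : m ≤ 0 := min_le_right _ _
    have hmi : m ≤ 1 - a - b := min_le_left _ _
    set c : ℝ := min b 1 with hc
    have hc01 : c ∈ Icc (0:ℝ) 1 := ⟨le_min hb.le (by norm_num), min_le_right _ _⟩
    have hqK : ((0:ℝ), c) ∈ K :=
      Set.mk_mem_prod (mem_Icc.mpr ⟨by linarith, by linarith⟩)
        (mem_Icc.mpr ⟨by linarith [hc01.1], by linarith [hc01.2]⟩)
    have hpK' := hpK s hs
    have hdd : dist ((a, b) : ℝ × ℝ) ((0:ℝ), c) ≤ -(a + m) := by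
      rw [Prod.dist_eq]
      apply max_le
      · show dist a 0 ≤ _
        rw [Real.dist_eq, sub_zero, abs_of_neg ha]; linarith
      · show dist b c ≤ _
        have hcb : c ≤ b := min_le_left _ _
        rw [Real.dist_eq, abs_of_nonneg (by linarith)]
        rcases le_total b 1 with h1 | h1
        · have hcc : c = b := min_eq_left h1
          rw [hcc]; linarith
        · have hcc : c = 1 := min_eq_right h1
          rw [hcc]; linarith
    have h1 := hdist₂ (a, b) hpK' ((0:ℝ), c) hqK
    have h2 : L * dist ((a, b) : ℝ × ℝ) ((0:ℝ), c) ≤ L * (-(a + m)) :=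
      mul_le_mul_of_nonneg_left hdd hL0
    have h3 := hb₂ c hc01
    have h4 : |Ω₂ (a, b) - Ω₂ (0, c)| ≤ L * (-(a + m)) := le_trans h1 h2
    rw [abs_le] at h4
    linarith [h4.1]
  have hbdry₂ : ∀ s ∈ Icc (0:ℝ) T₀, S₂ s < 0 → 0 < S₁ s →
      L * (S₂ s + min (1 - S₂ s - S₁ s) 0) ≤ Ω₁ (S₁ s, S₂ s) := by
    intro s hs hb ha
    set a := S₁ s; set b := S₂ s
    set m : ℝ := min (1 - b - a) 0 with hm
    have hm0 : m ≤ 0 := min_le_right _ _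
    have hmi : m ≤ 1 - b - a := min_le_left _ _
    set c : ℝ := min a 1 with hc
    have hc01 : c ∈ Icc (0:ℝ) 1 := ⟨le_min ha.le (by norm_num), min_le_right _ _⟩
    have hqK : ((c:ℝ), (0:ℝ)) ∈ K :=
      Set.mk_mem_prod (mem_Icc.mpr ⟨by linarith [hc01.1], by linarith [hc01.2]⟩)
        (mem_Icc.mpr ⟨by linarith, by linarith⟩)
    have hpK' := hpK s hs
    have hdd : dist ((a, b) : ℝ × ℝ) ((c:ℝ), (0:ℝ)) ≤ -(b + m) := by
      rw [Prod.dist_eq]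
      apply max_le
      · show dist a c ≤ _
        have hca : c ≤ a := min_le_left _ _
        rw [Real.dist_eq, abs_of_nonneg (by linarith)]
        rcases le_total a 1 with h1 | h1
        · have hcc : c = a := min_eq_left h1
          rw [hcc]; linarith
        · have hcc : c = 1 := min_eq_right h1
          rw [hcc]; linarith
      · show dist b 0 ≤ _
        rw [Real.dist_eq, sub_zero, abs_of_neg hb]; linarith
    have h1 := hdist₁ (a, b) hpK' ((c:ℝ), (0:ℝ)) hqK
    have h2 : L * dist ((a, b) : ℝ × ℝ) ((c:ℝ), (0:ℝ)) ≤ L * (-(b + m)) :=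
      mul_le_mul_of_nonneg_left hdd hL0
    have h3 := hb₁ c hc01
    have h4 : |Ω₁ (a, b) - Ω₁ (c, 0)| ≤ L * (-(b + m)) := le_trans h1 h2
    rw [abs_le] at h4
    linarith [h4.1]
  -- the Lyapunov function and its derivative
  set C : ℝ := 2 * ((γ₁ + |β₁| * (1 + 2 * B) + 2 * M + 2 * L * B)
      + (γ₂ + |β₂| * (1 + 2 * B) + 2 * M + 2 * L * B)
      + (γ₁ + γ₂ + |β₁| * B + |β₂| * B)) with hCdef
  set V : ℝ → ℝ := fun s =>
    min (S₁ s) 0 ^ 2 + (min (S₂ s) 0 ^ 2 + min (1 - S₁ s - S₂ s) 0 ^ 2) with hVdef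
  set V' : ℝ → ℝ := fun s =>
    2 * min (S₁ s) 0 * ((γ₁ - β₁ * S₁ s) * (1 - S₁ s - S₂ s)
        - Ω₁ (S₁ s, S₂ s) * S₁ s + Ω₂ (S₁ s, S₂ s) * S₂ s)
    + (2 * min (S₂ s) 0 * ((γ₂ - β₂ * S₂ s) * (1 - S₁ s - S₂ s)
        - Ω₂ (S₁ s, S₂ s) * S₂ s + Ω₁ (S₁ s, S₂ s) * S₁ s)
      + 2 * min (1 - S₁ s - S₂ s) 0 * (0 - ((γ₁ - β₁ * S₁ s) * (1 - S₁ s - S₂ s)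
        - Ω₁ (S₁ s, S₂ s) * S₁ s + Ω₂ (S₁ s, S₂ s) * S₂ s)
        - ((γ₂ - β₂ * S₂ s) * (1 - S₁ s - S₂ s)
        - Ω₂ (S₁ s, S₂ s) * S₂ s + Ω₁ (S₁ s, S₂ s) * S₁ s))) with hV'def
  have hVd : ∀ s ∈ Icc (0:ℝ) T₀, HasDerivAt V (V' s) s := by
    intro s hs
    exact ((sq_min_hasDerivAt (S₁ s)).comp s (hS₁ s hs)).add
      (((sq_min_hasDerivAt (S₂ s)).comp s (hS₂ s hs)).add
        (by have h := (sq_min_hasDerivAt (1 - S₁ s - S₂ s)).comp s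
              (((hasDerivAt_const s (1:ℝ)).sub (hS₁ s hs)).sub (hS₂ s hs)); exact h))
  have hVb : ∀ s ∈ Icc (0:ℝ) T₀, V' s ≤ C * V s := by
    intro s hs
    have hpK' := hpK s hs
    have K1 := key γ₁ β₁ B M L (S₁ s) (S₂ s) (Ω₁ (S₁ s, S₂ s)) (Ω₂ (S₁ s, S₂ s))
      hB1 (haB s hs) (hbB s hs) hγ₁ hL0 hM0 (hMa _ hpK') (hMb _ hpK')
      (fun h1 h2 => hbdry₁ s hs h1 h2)
    have K2 := key γ₂ β₂ B M L (S₂ s) (S₁ s) (Ω₂ (S₁ s, S₂ s)) (Ω₁ (S₁ s, S₂ s))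
      hB1 (hbB s hs) (haB s hs) hγ₂ hL0 hM0 (hMb _ hpK') (hMa _ hpK')
      (fun h1 h2 => hbdry₂ s hs h1 h2)
    have e : 1 - S₂ s - S₁ s = 1 - S₁ s - S₂ s := by ring
    rw [e] at K2
    -- third term
    have habs := abs_le.mp (haB s hs)
    have hbabs := abs_le.mp (hbB s hs)
    have hβ₁abs : -|β₁| ≤ β₁ ∧ β₁ ≤ |β₁| := ⟨neg_abs_le _, le_abs_self _⟩
    have hβ₂abs : -|β₂| ≤ β₂ ∧ β₂ ≤ |β₂| := ⟨neg_abs_le _, le_abs_self _⟩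
    have hβ₁0 : (0:ℝ) ≤ |β₁| := abs_nonneg _
    have hβ₂0 : (0:ℝ) ≤ |β₂| := abs_nonneg _
    set C₃ : ℝ := γ₁ + γ₂ + |β₁| * B + |β₂| * B with hC₃def
    have hC₃0 : (0:ℝ) ≤ C₃ := by nlinarith
    have K3 : min (1 - S₁ s - S₂ s) 0 * (0 - ((γ₁ - β₁ * S₁ s) * (1 - S₁ s - S₂ s)
        - Ω₁ (S₁ s, S₂ s) * S₁ s + Ω₂ (S₁ s, S₂ s) * S₂ s)
        - ((γ₂ - β₂ * S₂ s) * (1 - S₁ s - S₂ s)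
        - Ω₂ (S₁ s, S₂ s) * S₂ s + Ω₁ (S₁ s, S₂ s) * S₁ s)) ≤
        C₃ * min (1 - S₁ s - S₂ s) 0 ^ 2 := by
      set i : ℝ := 1 - S₁ s - S₂ s with hidef
      set g : ℝ := γ₁ - β₁ * S₁ s + (γ₂ - β₂ * S₂ s) with hgdef
      have hgabs : |g| ≤ C₃ := by
        rw [abs_le]
        constructor <;> nlinarith
      have elhs : (0 - ((γ₁ - β₁ * S₁ s) * i - Ω₁ (S₁ s, S₂ s) * S₁ s
          + Ω₂ (S₁ s, S₂ s) * S₂ s) - ((γ₂ - β₂ * S₂ s) * i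
          - Ω₂ (S₁ s, S₂ s) * S₂ s + Ω₁ (S₁ s, S₂ s) * S₁ s)) = -(g * i) := by
        rw [hgdef]; ring
      rw [elhs]
      rcases le_or_gt 0 i with hi | hi
      · rw [min_eq_right hi]
        simp
      · rw [min_eq_left hi.le]
        have e2 : i * -(g * i) = -g * i ^ 2 := by ring
        rw [e2]
        have e3 : -g ≤ |g| := neg_le_abs _
        have e4 : -g * i ^ 2 ≤ |g| * i ^ 2 :=
          mul_le_mul_of_nonneg_right e3 (sq_nonneg _)
        have e5 : |g| * i ^ 2 ≤ C₃ * i ^ 2 :=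
          mul_le_mul_of_nonneg_right hgabs (sq_nonneg _)
        linarith
    -- combine
    have hQ : min (1 - S₁ s - S₂ s) 0 ^ 2 ≤ V s := by
      have := sq_nonneg (min (S₁ s) 0)
      have := sq_nonneg (min (S₂ s) 0)
      simp only [hVdef]
      linarith
    have hC₃Q : C₃ * min (1 - S₁ s - S₂ s) 0 ^ 2 ≤ C₃ * V s :=
      mul_le_mul_of_nonneg_left hQ hC₃0
    have hVs : V s = min (S₁ s) 0 ^ 2 + (min (S₂ s) 0 ^ 2
        + min (1 - S₁ s - S₂ s) 0 ^ 2) := rfl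
    have hV's : V' s = 2 * min (S₁ s) 0 * ((γ₁ - β₁ * S₁ s) * (1 - S₁ s - S₂ s)
        - Ω₁ (S₁ s, S₂ s) * S₁ s + Ω₂ (S₁ s, S₂ s) * S₂ s)
      + (2 * min (S₂ s) 0 * ((γ₂ - β₂ * S₂ s) * (1 - S₁ s - S₂ s)
          - Ω₂ (S₁ s, S₂ s) * S₂ s + Ω₁ (S₁ s, S₂ s) * S₁ s)
        + 2 * min (1 - S₁ s - S₂ s) 0 * (0 - ((γ₁ - β₁ * S₁ s) * (1 - S₁ s - S₂ s)
          - Ω₁ (S₁ s, S₂ s) * S₁ s + Ω₂ (S₁ s, S₂ s) * S₂ s)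
          - ((γ₂ - β₂ * S₂ s) * (1 - S₁ s - S₂ s)
          - Ω₂ (S₁ s, S₂ s) * S₂ s + Ω₁ (S₁ s, S₂ s) * S₁ s))) := rfl
    rw [hV's, hCdef]
    rw [hVs] at hC₃Q ⊢
    linarith
  -- Gronwall
  intro t ht
  have hgron := gron T₀ C V V' hVd hVb t ht
  have hV0 : V 0 = 0 := by
    have e1 : min (S₁ 0) 0 = 0 := min_eq_right h0.1
    have e2 : min (S₂ 0) 0 = 0 := min_eq_right h0.2.1
    have e3 : min (1 - S₁ 0 - S₂ 0) 0 = 0 := min_eq_right (by linarith [h0.2.2])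
    simp only [hVdef, e1, e2, e3]
    norm_num
  rw [hV0] at hgron
  have hVnn : 0 ≤ V t := by
    simp only [hVdef]
    positivity
  have hVt : V t = 0 := by
    nlinarith [Real.exp_pos (-C * t)]
  have hVteq : min (S₁ t) 0 ^ 2 + (min (S₂ t) 0 ^ 2
      + min (1 - S₁ t - S₂ t) 0 ^ 2) = 0 := hVt
  have q1 : min (S₁ t) 0 = 0 := by
    nlinarith [sq_nonneg (min (S₁ t) 0), sq_nonneg (min (S₂ t) 0),
      sq_nonneg (min (1 - S₁ t - S₂ t) 0)]
  have q2 : min (S₂ t) 0 = 0 := by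
    nlinarith [sq_nonneg (min (S₁ t) 0), sq_nonneg (min (S₂ t) 0),
      sq_nonneg (min (1 - S₁ t - S₂ t) 0)]
  have q3 : min (1 - S₁ t - S₂ t) 0 = 0 := by
    nlinarith [sq_nonneg (min (S₁ t) 0), sq_nonneg (min (S₂ t) 0),
      sq_nonneg (min (1 - S₁ t - S₂ t) 0)]
  refine ⟨min_eq_right_iff.mp q1, min_eq_right_iff.mp q2, ?_⟩
  have := min_eq_right_iff.mp q3
  linarith
end

section
/- Let f be an X²-type RND function with data (f₀,f₁,f₂,P_f,λ) and auxiliary function h_f, and let β₁ > β₂. Define A₁(I) := h_f(β₁,I)/(β₂−β₁) and A₂(I) := h_f(β₂,I)/(β₁−β₂). Then: (a) there exist γ₁, γ₂ ≥ 0 with γ₁+γ₂ = 1 and β₁γ₁ + β₂γ₂ = λ if and only if β₂ ≤ λ ≤ β₁; (b) A₁(I) ≥ 0 and A₂(I) ≥ 0 for all I ∈ [0,1] if and only if h_f(β₁,I) ≤ 0 ≤ h_f(β₂,I) for all I ∈ [0,1]. Consequently, the SSISS admissibility of the reconstructed system holds if and only if β₁ ∈ B_f⁺ := {z ≥ λ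 : h_f(z,I) ≤ 0 for all I ∈ [0,1]} and β₂ ∈ B_f⁻ := {z ≤ λ : h_f(z,I) ≥ 0 for all I ∈ [0,1]}. -/
lemma div_neg_nonneg_iff {a c : ℝ} (hc : c < 0) : 0 ≤ a / c ↔ a ≤ 0 := by
  rw [div_nonneg_iff]
  constructor
  · rintro (⟨ha, hc'⟩ | ⟨ha, _⟩)
    · linarith
    · exact ha
  · intro ha; exact Or.inr ⟨ha, hc.le⟩

/-- admissibility of the reconstructed SSISS system in terms of the
auxiliary function `h_f`, i.e. `β₁ ∈ B_f⁺` and `β₂ ∈ B_f⁻`. -/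
theorem stmt_6 (f₀ f₁ f₂ Pf : ℝ → ℝ)
    (hc₀ : Continuous f₀) (hc₁ : Continuous f₁) (hc₂ : Continuous f₂)
    (hcP : Continuous Pf)
    (hP : ∀ I : ℝ, f₀ I = (1 - I) * Pf I + f₀ 1 * I)
    (β₁ β₂ : ℝ) (hβ : β₁ > β₂) :
    ((∃ γ₁ γ₂ : ℝ, 0 ≤ γ₁ ∧ 0 ≤ γ₂ ∧ γ₁ + γ₂ = 1 ∧ β₁ * γ₁ + β₂ * γ₂ = f₀ 1) ↔
        (β₂ ≤ f₀ 1 ∧ f₀ 1 ≤ β₁)) ∧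
    ((∀ I ∈ Set.Icc (0:ℝ) 1,
        0 ≤ hfun f₁ f₂ Pf β₁ I / (β₂ - β₁) ∧ 0 ≤ hfun f₁ f₂ Pf β₂ I / (β₁ - β₂)) ↔
      (∀ I ∈ Set.Icc (0:ℝ) 1, hfun f₁ f₂ Pf β₁ I ≤ 0 ∧ 0 ≤ hfun f₁ f₂ Pf β₂ I)) ∧
    (((∃ γ₁ γ₂ : ℝ, 0 ≤ γ₁ ∧ 0 ≤ γ₂ ∧ γ₁ + γ₂ = 1 ∧ β₁ * γ₁ + β₂ * γ₂ = f₀ 1) ∧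
        (∀ I ∈ Set.Icc (0:ℝ) 1,
          0 ≤ hfun f₁ f₂ Pf β₁ I / (β₂ - β₁) ∧ 0 ≤ hfun f₁ f₂ Pf β₂ I / (β₁ - β₂))) ↔
      (β₁ ∈ {z : ℝ | f₀ 1 ≤ z ∧ ∀ I ∈ Set.Icc (0:ℝ) 1, hfun f₁ f₂ Pf z I ≤ 0} ∧
        β₂ ∈ {z : ℝ | z ≤ f₀ 1 ∧ ∀ I ∈ Set.Icc (0:ℝ) 1, 0 ≤ hfun f₁ f₂ Pf z I})) := by
  have hβ' : β₂ - β₁ < 0 := by linarith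
  have hβ'' : (0:ℝ) < β₁ - β₂ := by linarith
  have partA : (∃ γ₁ γ₂ : ℝ, 0 ≤ γ₁ ∧ 0 ≤ γ₂ ∧ γ₁ + γ₂ = 1 ∧
      β₁ * γ₁ + β₂ * γ₂ = f₀ 1) ↔ (β₂ ≤ f₀ 1 ∧ f₀ 1 ≤ β₁) := by
    constructor
    · rintro ⟨γ₁, γ₂, h1, h2, h3, h4⟩
      have a1 := mul_nonneg h1 (sub_nonneg.2 hβ.le)
      have a2 := mul_nonneg h2 (sub_nonneg.2 hβ.le)
      have e1 : f₀ 1 - β₂ = γ₁ * (β₁ - β₂) := by linear_combination β₂ * h3 - h4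
      have e2 : β₁ - f₀ 1 = γ₂ * (β₁ - β₂) := by linear_combination h4 - β₁ * h3
      constructor <;> linarith
    · rintro ⟨h1, h2⟩
      refine ⟨(f₀ 1 - β₂) / (β₁ - β₂), (β₁ - f₀ 1) / (β₁ - β₂), ?_, ?_, ?_, ?_⟩
      · exact div_nonneg (by linarith) hβ''.le
      · exact div_nonneg (by linarith) hβ''.le
      · field_simp; ring
      · field_simp; ring
    
  have partB : (∀ I ∈ Set.Icc (0:ℝ) 1,
        0 ≤ hfun f₁ f₂ Pf β₁ I / (β₂ - β₁) ∧ 0 ≤ hfun f₁ f₂ Pf β₂ I / (β₁ - β₂)) ↔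
      (∀ I ∈ Set.Icc (0:ℝ) 1, hfun f₁ f₂ Pf β₁ I ≤ 0 ∧ 0 ≤ hfun f₁ f₂ Pf β₂ I) := by
    apply forall₂_congr
    intro I hI
    rw [div_neg_nonneg_iff hβ', le_div_iff₀ hβ'', zero_mul]
  refine ⟨partA, partB, ?_⟩
  rw [partA, partB]
  constructor
  · rintro ⟨⟨h1, h2⟩, h3⟩
    exact ⟨⟨h2, fun I hI => (h3 I hI).1⟩, ⟨h1, fun I hI => (h3 I hI).2⟩⟩
  · rintro ⟨⟨h2, h3⟩, ⟨h1, h4⟩⟩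
    exact ⟨⟨h1, h2⟩, fun I hI => ⟨h3 I hI, h4 I hI⟩⟩
end

section
/- Let f be an X²-type RND function with data (f₀,f₁,f₂,P_f,λ) and auxiliary function h_f, and suppose f is admissible, i.e. there exists (β₁,β₂) with β₁ > β₂, β₂ ≤ λ ≤ β₁, and h_f(β₁,I) ≤ 0 ≤ h_f(β₂,I) for all I ∈ [0,1]. Put f₀₀ := P_f(0), f₁₀ := f₁(0), f₂₀ := f₂(0). Then: (a) f₁(1)² − 4·P_f(1) ≥ 0 (so the roots Z_± of z² + f₁(1)z + P_f(1) are real); and (b) either f₂₀ ≠ 0 and f₁₀² − 4·f₂₀·f₀₀ ≥ 0, or f₂₀ = 0 and f₁₀ < 0, or f₀₀ = f₁₀ = f₂₀ = 0. -/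
section Quadratic

variable {K : Type*} [Field K] [LinearOrder K] [IsStrictOrderedRing K] {a b c x y : K}

theorem discrim_nonneg_of_quadratic_nonpos (ha : 0 < a) (hx : a * (x * x) + b * x + c ≤ 0) :
    0 ≤ discrim a b c := by
  have key : discrim a b c = (2 * a * x + b) ^ 2 - 4 * a * (a * (x * x) + b * x + c) := by
    rw [discrim]; ring
  rw [key]
  nlinarith [sq_nonneg (2 * a * x + b)]

theorem discrim_nonneg_of_quadratic_nonpos_of_nonneg (ha : a ≠ 0)
    (hx : a * (x * x) + b * x + c ≤ 0) (hy : 0 ≤ a * (y * y) + b * y + c) :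
    0 ≤ discrim a b c := by
  rcases ha.lt_or_gt with ha | ha
  · rw [← discrim_neg]
    exact discrim_nonneg_of_quadratic_nonpos (neg_pos.2 ha) (x := y) (by linarith)
  · exact discrim_nonneg_of_quadratic_nonpos ha hx

theorem neg_or_eq_zero_of_affine_nonpos_of_nonneg (hyx : y < x) (hx : b * x + c ≤ 0)
    (hy : 0 ≤ b * y + c) : b < 0 ∨ b = 0 ∧ c = 0 := by
  have hb : b ≤ 0 := by nlinarith
  rcases hb.lt_or_eq with hb | hb
  · exact .inl hb
  · subst hb
    exact .inr ⟨rfl, by linarith⟩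

theorem quadratic_sign_change_cases (hyx : y < x) (hx : a * (x * x) + b * x + c ≤ 0)
    (hy : 0 ≤ a * (y * y) + b * y + c) :
    (a ≠ 0 ∧ 0 ≤ discrim a b c) ∨ (a = 0 ∧ b < 0) ∨ (c = 0 ∧ b = 0 ∧ a = 0) := by
  by_cases ha : a = 0
  · subst ha
    simp only [zero_mul, zero_add] at hx hy
    rcases neg_or_eq_zero_of_affine_nonpos_of_nonneg hyx hx hy with hb | ⟨hb, hc⟩
    · exact .inr (.inl ⟨rfl, hb⟩)
    · exact .inr (.inr ⟨hc, hb, rfl⟩)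
  · exact .inl ⟨ha, discrim_nonneg_of_quadratic_nonpos_of_nonneg ha hx hy⟩

end Quadratic

theorem hfun_zero (f₁ f₂ Pf : ℝ → ℝ) (z : ℝ) :
    hfun f₁ f₂ Pf z 0 = f₂ 0 * (z * z) + f₁ 0 * z + Pf 0 := by
  simp only [hfun]; ring

theorem hfun_one (f₁ f₂ Pf : ℝ → ℝ) (z : ℝ) :
    hfun f₁ f₂ Pf z 1 = 1 * (z * z) + f₁ 1 * z + Pf 1 := by
  simp only [hfun]; ring

theorem stmt_8_general (f₀ f₁ f₂ Pf : ℝ → ℝ)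
    (hadm : ∃ β₁ β₂ : ℝ, β₁ > β₂ ∧ β₂ ≤ f₀ 1 ∧ f₀ 1 ≤ β₁ ∧
      ∀ I ∈ Set.Icc (0:ℝ) 1, hfun f₁ f₂ Pf β₁ I ≤ 0 ∧ 0 ≤ hfun f₁ f₂ Pf β₂ I) :
    0 ≤ f₁ 1 ^ 2 - 4 * Pf 1 ∧
    ((f₂ 0 ≠ 0 ∧ 0 ≤ f₁ 0 ^ 2 - 4 * f₂ 0 * Pf 0) ∨
      (f₂ 0 = 0 ∧ f₁ 0 < 0) ∨
      (Pf 0 = 0 ∧ f₁ 0 = 0 ∧ f₂ 0 = 0)) := by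
  obtain ⟨β₁, β₂, hβ, -, -, h⟩ := hadm
  obtain ⟨h₁, -⟩ := h 1 (Set.right_mem_Icc.2 zero_le_one)
  obtain ⟨h₀₁, h₀₂⟩ := h 0 (Set.left_mem_Icc.2 zero_le_one)
  rw [hfun_one] at h₁
  rw [hfun_zero] at h₀₁ h₀₂
  refine ⟨?_, quadratic_sign_change_cases hβ h₀₁ h₀₂⟩
  simpa [discrim] using discrim_nonneg_of_quadratic_nonpos one_pos h₁

/-- necessary discriminant conditions for admissibility of an
X²-model: the roots `Z_±` of `z² + f₁(1)z + P_f(1)` are real, and at `I = 0`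
one of the three alternatives holds. -/
theorem stmt_8 (f₀ f₁ f₂ Pf : ℝ → ℝ)
    (hc₀ : Continuous f₀) (hc₁ : Continuous f₁) (hc₂ : Continuous f₂)
    (hcP : Continuous Pf)
    (hP : ∀ I : ℝ, f₀ I = (1 - I) * Pf I + f₀ 1 * I)
    (hadm : ∃ β₁ β₂ : ℝ, β₁ > β₂ ∧ β₂ ≤ f₀ 1 ∧ f₀ 1 ≤ β₁ ∧
      ∀ I ∈ Set.Icc (0:ℝ) 1, hfun f₁ f₂ Pf β₁ I ≤ 0 ∧ 0 ≤ hfun f₁ f₂ Pf β₂ I) :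
    0 ≤ f₁ 1 ^ 2 - 4 * Pf 1 ∧
    ((f₂ 0 ≠ 0 ∧ 0 ≤ f₁ 0 ^ 2 - 4 * f₂ 0 * Pf 0) ∨
      (f₂ 0 = 0 ∧ f₁ 0 < 0) ∨
      (Pf 0 = 0 ∧ f₁ 0 = 0 ∧ f₂ 0 = 0)) :=
  stmt_8_general f₀ f₁ f₂ Pf hadm
end

section
/- Let κ > 0, and let 0 ≤ Y₋ ≤ Y₊, f₀₀ ≥ 0, f₁₀ < 0 and λ ≥ 0 be reals. Set R₀ := −f₀₀/f₁₀ and define h(z,I) := (f₁₀z + f₀₀) + I·(z − Y₊)(z − Y₋) + κ·I(1−I)·z·(Y₋ − z) (this is the auxiliary function h_f of a Model-2 RND polynomial). Suppose the roots Z₋ ≤ Z₊ of p_Z(z) := h(z,1) = (f₁₀z+f₀₀) + (z−Y₊)(z−Y₋) are real, that Z₊ > 0, and that Y₋ ≤ R₀ ≤ Z₊ and Y₋ ≤ λ ≤ Z₊. Then: (a) for every z ∈ [0,Y₋] and every I ∈ [0,1], h(z,I) ≥ 0; (b) {z ≥ λ : h(z,I) ≤ 0 for all I ∈ [0,1]}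 = [max{λ,R₀,Z₋}, Z₊]. In particular [0,Y₋] ⊆ {z ≤ λ : h(z,I) ≥ 0 for all I ∈ [0,1]}, so f is admissible. -/
/-- Auxiliary function `h_f` of a Model-2 RND polynomial. -/
def hfModel2 (κ Ym Yp f₀₀ f₁₀ : ℝ) (z I : ℝ) : ℝ :=
  (f₁₀ * z + f₀₀) + I * ((z - Yp) * (z - Ym)) + κ * (I * (1 - I)) * (z * (Ym - z))

/-- admissibility in Model-2. Here `Ym = Y₋`, `Yp = Y₊`,
`lam = λ`, `R₀ = -f₀₀/f₁₀` and `Z₋ ≤ Z₊` are the roots of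
`p_Z(z) = (f₁₀ z + f₀₀) + (z - Y₊)(z - Y₋)`. -/
theorem stmt_10 (κ Ym Yp f₀₀ f₁₀ lam Zm Zp : ℝ)
    (hκ : 0 < κ) (hYm : 0 ≤ Ym) (hY : Ym ≤ Yp)
    (hf00 : 0 ≤ f₀₀) (hf10 : f₁₀ < 0) (hlam : 0 ≤ lam)
    (hZ : Zm ≤ Zp)
    (hZroots : ∀ z : ℝ, (f₁₀ * z + f₀₀) + (z - Yp) * (z - Ym) = (z - Zp) * (z - Zm))
    (hZpos : 0 < Zp)
    (hR₁ : Ym ≤ -f₀₀ / f₁₀) (hR₂ : -f₀₀ / f₁₀ ≤ Zp)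
    (hlam₁ : Ym ≤ lam) (hlam₂ : lam ≤ Zp) :
    (∀ z ∈ Set.Icc 0 Ym, ∀ I ∈ Set.Icc (0:ℝ) 1, 0 ≤ hfModel2 κ Ym Yp f₀₀ f₁₀ z I) ∧
    {z : ℝ | lam ≤ z ∧ ∀ I ∈ Set.Icc (0:ℝ) 1, hfModel2 κ Ym Yp f₀₀ f₁₀ z I ≤ 0} =
      Set.Icc (max lam (max (-f₀₀ / f₁₀) Zm)) Zp ∧
    Set.Icc 0 Ym ⊆
      {z : ℝ | z ≤ lam ∧ ∀ I ∈ Set.Icc (0:ℝ) 1, 0 ≤ hfModel2 κ Ym Yp f₀₀ f₁₀ z I} ∧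
    (∃ β₁ β₂ : ℝ, β₁ > β₂ ∧ β₂ ≤ lam ∧ lam ≤ β₁ ∧
      ∀ I ∈ Set.Icc (0:ℝ) 1,
        hfModel2 κ Ym Yp f₀₀ f₁₀ β₁ I ≤ 0 ∧ 0 ≤ hfModel2 κ Ym Yp f₀₀ f₁₀ β₂ I) := by
  have hf10' : f₁₀ ≠ 0 := ne_of_lt hf10
  have hrmul : f₁₀ * (-f₀₀ / f₁₀) = -f₀₀ := by field_simp
  -- Part (a)
  have ha : ∀ z ∈ Set.Icc (0:ℝ) Ym, ∀ I ∈ Set.Icc (0:ℝ) 1,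
      0 ≤ hfModel2 κ Ym Yp f₀₀ f₁₀ z I := by
    rintro z ⟨hz0, hzY⟩ I ⟨hI0, hI1⟩
    have hzr : z ≤ -f₀₀ / f₁₀ := hzY.trans hR₁
    have h1 : 0 ≤ f₁₀ * z + f₀₀ := by
      nlinarith [mul_le_mul_of_nonpos_left hzr hf10.le]
    have h2 : 0 ≤ I * ((z - Yp) * (z - Ym)) := by
      have h2' : (0:ℝ) ≤ (z - Yp) * (z - Ym) := by nlinarith
      exact mul_nonneg hI0 h2'
    have h3 : 0 ≤ κ * (I * (1 - I)) * (z * (Ym - z)) :=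
      mul_nonneg (mul_nonneg hκ.le (mul_nonneg hI0 (by linarith)))
        (mul_nonneg hz0 (by linarith))
    unfold hfModel2; linarith
  -- Negativity lemma
  have hneg : ∀ z, -f₀₀ / f₁₀ ≤ z → Zm ≤ z → z ≤ Zp → Ym ≤ z →
      ∀ I ∈ Set.Icc (0:ℝ) 1, hfModel2 κ Ym Yp f₀₀ f₁₀ z I ≤ 0 := by
    rintro z hrz hZmz hzZp hYmz I ⟨hI0, hI1⟩
    have hz0 : 0 ≤ z := le_trans hYm hYmz
    have hA : f₁₀ * z + f₀₀ ≤ 0 := by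
      nlinarith [mul_le_mul_of_nonpos_left hrz hf10.le]
    have key : hfModel2 κ Ym Yp f₀₀ f₁₀ z I =
        (1 - I) * (f₁₀ * z + f₀₀) + I * ((z - Zp) * (z - Zm))
          + κ * ((I * (1 - I)) * (z * (Ym - z))) := by
      unfold hfModel2; linear_combination I * hZroots z
    have T1 : 0 ≤ (1 - I) * (-(f₁₀ * z + f₀₀)) :=
      mul_nonneg (by linarith) (by linarith)
    have T2 : 0 ≤ I * (-((z - Zp) * (z - Zm))) := by
      have := mul_nonneg (sub_nonneg.mpr hzZp) (sub_nonneg.mpr hZmz)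
      exact mul_nonneg hI0 (by nlinarith)
    have T3 : 0 ≤ κ * ((I * (1 - I)) * (z * (z - Ym))) :=
      mul_nonneg hκ.le (mul_nonneg (mul_nonneg hI0 (by linarith))
        (mul_nonneg hz0 (by linarith)))
    nlinarith [key, T1, T2, T3]
  refine ⟨ha, ?_, ?_, ?_⟩
  · ext z
    simp only [Set.mem_setOf_eq, Set.mem_Icc, max_le_iff]
    constructor
    · rintro ⟨hzlam, hall⟩
      have h0 : f₁₀ * z + f₀₀ ≤ 0 := by
        have := hall 0 ⟨le_refl 0, by norm_num⟩
        simpa [hfModel2] using this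
      have h1 : (z - Zp) * (z - Zm) ≤ 0 := by
        have h1' := hall 1 ⟨by norm_num, le_refl 1⟩
        unfold hfModel2 at h1'
        nlinarith [hZroots z]
      have hrz : -f₀₀ / f₁₀ ≤ z := (div_le_iff_of_neg hf10).mpr (by linarith)
      refine ⟨⟨hzlam, hrz, ?_⟩, ?_⟩ <;> nlinarith [h1, hZ]
    · rintro ⟨⟨hzlam, hrz, hZmz⟩, hzZp⟩
      exact ⟨hzlam, hneg z hrz hZmz hzZp (le_trans hlam₁ hzlam)⟩
  · intro z hz
    exact ⟨le_trans hz.2 hlam₁, ha z hz⟩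
  · refine ⟨Zp, 0, hZpos, hlam, hlam₂, fun I hI => ?_⟩
    exact ⟨hneg Zp hR₂ hZ (le_refl Zp) (le_trans hlam₁ hlam₂) I hI,
      ha 0 ⟨le_refl 0, hYm⟩ I hI⟩
end

section
/- Consider the X² SSISS system with data (β₁,β₂,γ₁,γ₂,A₁,A₂,B), where β₁ > β₂, γ₁ ≥ 0, γ₂ ≥ 0, γ₁+γ₂ = 1, and A₁, A₂, B : ℝ → ℝ are continuously differentiable with A₁(I) ≥ 0 and A₂(I) ≥ 0 for all I ∈ [0,1]. Then there exists no nonconstant periodic solution t ↦ (S₁(t),S₂(t)) of this system whose orbit is contained in the open triangle {(S₁,S₂) : S₁ > 0, S₂ > 0, S₁+S₂ < 1}. -/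
open Real

/-- Key strict inequality: the fiber function is strictly decreasing. -/
lemma ssiss_keyineq (g₁ g₂ a₁ a₂ q x y τ : ℝ) (hg₁ : 0 ≤ g₁) (hg₂ : 0 ≤ g₂)
    (ha₁ : 0 ≤ a₁) (ha₂ : 0 ≤ a₂) (hq : 0 < q)
    (hx : 0 < x) (hy : 0 < y) (hxy : x + y = 1)
    (hτ : 0 < τ) (hτ1 : τ < 1) (hne : x ≠ τ) :
    (x - τ) * ((q * (g₁ / x - g₂ / y) + a₂ / x - a₁ / y
        - q * (Real.log x - Real.log y))
      - (q * (g₁ / τ - g₂ / (1 - τ)) + a₂ / τ - a₁ / (1 - τ)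
        - q * (Real.log τ - Real.log (1 - τ)))) < 0 := by
  have hy' : y = 1 - x := by linarith
  subst hy'
  have hx1 : x < 1 := by linarith
  have hbreq : (q * (g₁ / x - g₂ / (1 - x)) + a₂ / x - a₁ / (1 - x)
        - q * (Real.log x - Real.log (1 - x)))
      - (q * (g₁ / τ - g₂ / (1 - τ)) + a₂ / τ - a₁ / (1 - τ)
        - q * (Real.log τ - Real.log (1 - τ)))
      = q * g₁ * (1 / x - 1 / τ) + a₂ * (1 / x - 1 / τ)
        + q * g₂ * (1 / (1 - τ) - 1 / (1 - x)) + a₁ * (1 / (1 - τ) - 1 / (1 - x))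
        + q * ((Real.log τ - Real.log x) + (Real.log (1 - x) - Real.log (1 - τ))) := by
    rw [one_div, one_div, one_div, one_div, div_eq_mul_inv, div_eq_mul_inv, div_eq_mul_inv,
      div_eq_mul_inv, div_eq_mul_inv, div_eq_mul_inv, div_eq_mul_inv, div_eq_mul_inv]
    ring
  rcases hne.lt_or_gt with h | h
  · have h1 : 1 / τ < 1 / x := one_div_lt_one_div_of_lt hx h
    have h2 : 1 / (1 - x) < 1 / (1 - τ) := one_div_lt_one_div_of_lt (by linarith) (by linarith)
    have h3 : Real.log x < Real.log τ := Real.log_lt_log hx h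
    have h4 : Real.log (1 - τ) < Real.log (1 - x) := Real.log_lt_log (by linarith) (by linarith)
    have t1 : 0 ≤ q * g₁ * (1 / x - 1 / τ) :=
      mul_nonneg (mul_nonneg hq.le hg₁) (by linarith)
    have t2 : 0 ≤ a₂ * (1 / x - 1 / τ) := mul_nonneg ha₂ (by linarith)
    have t3 : 0 ≤ q * g₂ * (1 / (1 - τ) - 1 / (1 - x)) :=
      mul_nonneg (mul_nonneg hq.le hg₂) (by linarith)
    have t4 : 0 ≤ a₁ * (1 / (1 - τ) - 1 / (1 - x)) := mul_nonneg ha₁ (by linarith)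
    have t5 : 0 < q * ((Real.log τ - Real.log x) + (Real.log (1 - x) - Real.log (1 - τ))) :=
      mul_pos hq (by linarith)
    have hbr : 0 < (q * (g₁ / x - g₂ / (1 - x)) + a₂ / x - a₁ / (1 - x)
        - q * (Real.log x - Real.log (1 - x)))
      - (q * (g₁ / τ - g₂ / (1 - τ)) + a₂ / τ - a₁ / (1 - τ)
        - q * (Real.log τ - Real.log (1 - τ))) := by rw [hbreq]; linarith
    exact mul_neg_of_neg_of_pos (by linarith) hbr
  · have h1 : 1 / x < 1 / τ := one_div_lt_one_div_of_lt hτ h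
    have h2 : 1 / (1 - τ) < 1 / (1 - x) := one_div_lt_one_div_of_lt (by linarith) (by linarith)
    have h3 : Real.log τ < Real.log x := Real.log_lt_log hτ h
    have h4 : Real.log (1 - x) < Real.log (1 - τ) := Real.log_lt_log (by linarith) (by linarith)
    have t1 : 0 ≤ q * g₁ * (1 / τ - 1 / x) :=
      mul_nonneg (mul_nonneg hq.le hg₁) (by linarith)
    have t2 : 0 ≤ a₂ * (1 / τ - 1 / x) := mul_nonneg ha₂ (by linarith)
    have t3 : 0 ≤ q * g₂ * (1 / (1 - x) - 1 / (1 - τ)) :=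
      mul_nonneg (mul_nonneg hq.le hg₂) (by linarith)
    have t4 : 0 ≤ a₁ * (1 / (1 - x) - 1 / (1 - τ)) := mul_nonneg ha₁ (by linarith)
    have t5 : 0 < q * ((Real.log x - Real.log τ) + (Real.log (1 - τ) - Real.log (1 - x))) :=
      mul_pos hq (by linarith)
    have hbr : (q * (g₁ / x - g₂ / (1 - x)) + a₂ / x - a₁ / (1 - x)
        - q * (Real.log x - Real.log (1 - x)))
      - (q * (g₁ / τ - g₂ / (1 - τ)) + a₂ / τ - a₁ / (1 - τ)
        - q * (Real.log τ - Real.log (1 - τ))) < 0 := by rw [hbreq]; linarith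
    exact mul_neg_of_pos_of_neg (by linarith) hbr

/-- A periodic antitone function is constant. -/
lemma ssiss_const_of_antitone_periodic {f : ℝ → ℝ} {p : ℝ} (hp : 0 < p)
    (hper : ∀ t, f (t + p) = f t) (hanti : Antitone f) : ∀ a b, f a = f b := by
  have key : ∀ a b : ℝ, a ≤ b → f a = f b := by
    intro a b hab
    have h2 : ∀ k : ℕ, f (a + k * p) = f a := by
      intro k
      induction k with
      | zero => simp
      | succ m ih =>
        have e : a + ((m : ℝ) + 1) * p = (a + m * p) + p := by ring
        rw [Nat.cast_succ, e, hper, ih]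
    obtain ⟨k, hk⟩ := exists_nat_ge ((b - a) / p)
    have hbk : b ≤ a + k * p := by
      rw [div_le_iff₀ hp] at hk; linarith
    have h3 : f (a + k * p) ≤ f b := hanti hbk
    have h1 : f b ≤ f a := hanti hab
    rw [h2 k] at h3
    linarith
  intro a b
  rcases le_total a b with h | h
  exacts [key a b h, (key b a h).symm]

/-- A continuous periodic function attains a global max. -/
lemma ssiss_exists_global_max {f : ℝ → ℝ} {p : ℝ} (hp : 0 < p)
    (hper : ∀ t, f (t + p) = f t) (hc : Continuous f) :
    ∃ tM, ∀ s, f s ≤ f tM := by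
  obtain ⟨tM, -, hM⟩ := (isCompact_Icc (a := (0:ℝ)) (b := p)).exists_isMaxOn
    (Set.nonempty_Icc.2 hp.le) hc.continuousOn
  refine ⟨tM, fun s => ?_⟩
  have hP : Function.Periodic f p := hper
  obtain ⟨y, hy, hys⟩ := hP.exists_mem_Ico₀ hp s
  rw [hys]
  exact hM (Set.mem_Icc.2 ⟨hy.1, hy.2.le⟩)


set_option maxHeartbeats 1000000 in
private lemma ssiss_GZ (b1 b2 g1 g2 a1 a2 bb s1 s2 : ℝ) (hs1 : s1 ≠ 0) (hs2 : s2 ≠ 0) :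
    ((-b1 * s1 + g1) * (1 - s1 - s2) - a1 * s1 + a2 * s2 - (b1 - b2) * bb * (s1 * s2)) / s1
      - ((-b2 * s2 + g2) * (1 - s1 - s2) - a2 * s2 + a1 * s1 - (b2 - b1) * bb * (s1 * s2)) / s2
    = -(b1 - b2) * (1 - s1 - s2) + (1 - s1 - s2) * (g1 / s1 - g2 / s2)
      + (s1 + s2) * (a2 / s1 - a1 / s2) - (b1 - b2) * bb * (s1 + s2) := by
  field_simp
  ring

set_option maxHeartbeats 1000000 in
private lemma ssiss_G1 (s1 s2 b1 b2 Z : ℝ)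
    (hs1 : s1 ≠ 0) (hs2 : s2 ≠ 0) (hn : s1 + s2 ≠ 0) (hn2 : s2 + s1 ≠ 0)
    (hi : (1:ℝ) - s1 - s2 ≠ 0) :
    ∀ H Nv : ℝ,
      b2 * H + (b1 - b2) * (s1 / s2 * H / (1 + s1 / s2))
        - (H * (s1 + s2) - Z * ((1 - (b1 * s1 + b2 * s2)) * (1 - s1 - s2))) / (s1 + s2) ^ 2
        - Nv / ((1 - s1 - s2) * (s1 + s2)) * ((b1 * s1 + b2 * s2 - 1) * (1 - s1 - s2))
      = (b2 + (b1 - b2) * (s1 / (s1 + s2)) - 1 / (s1 + s2))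
          * (H - (1 - s1 - s2) / (s1 + s2) * Z - Nv) := by
  intro H Nv
  field_simp
  ring

set_option maxHeartbeats 1000000 in
private lemma ssiss_G2 (s1 s2 b1 b2 : ℝ) (hn : s1 + s2 ≠ 0) (hD : b1 - b2 ≠ 0) :
    b2 + (b1 - b2) * (s1 / (s1 + s2)) - 1 / (s1 + s2)
      = (b1 - b2) * (s1 / (s1 + s2) - (1 - b2 * (s1 + s2)) / ((b1 - b2) * (s1 + s2))) := by
  field_simp
  ring

set_option maxHeartbeats 1000000 in
private lemma ssiss_G3 (s1 s2 b1 b2 g1 g2 a1 a2 bb l1 l2 ln lt lt' T : ℝ)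
    (hs1 : s1 ≠ 0) (hs2 : s2 ≠ 0) (hn : s1 + s2 ≠ 0) (hi : (1:ℝ) - s1 - s2 ≠ 0)
    (hT : T ≠ 0) (hT1 : (1:ℝ) - T ≠ 0) :
    ((1 - s1 - s2) / (s1 + s2) * (g1 / (s1 / (s1 + s2)) - g2 / (s2 / (s1 + s2)))
        + a2 / (s1 / (s1 + s2)) - a1 / (s2 / (s1 + s2))
        - (1 - s1 - s2) / (s1 + s2) * ((l1 - ln) - (l2 - ln)))
      - ((1 - s1 - s2) / (s1 + s2) * (g1 / T - g2 / (1 - T))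
        + a2 / T - a1 / (1 - T)
        - (1 - s1 - s2) / (s1 + s2) * (lt - lt'))
    = (-(b1 - b2) * (1 - s1 - s2) + (1 - s1 - s2) * (g1 / s1 - g2 / s2)
        + (s1 + s2) * (a2 / s1 - a1 / s2) - (b1 - b2) * bb * (s1 + s2))
      - (1 - s1 - s2) / (s1 + s2) * (l1 - l2)
      - (-(b1 - b2) * (1 - s1 - s2)
        + (1 - s1 - s2) / (s1 + s2) * (g1 / T - g2 / (1 - T))
        + a2 / T - a1 / (1 - T)
        - (b1 - b2) * (s1 + s2) * bb
        - (1 - s1 - s2) / (s1 + s2) * (lt - lt')) := by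
  field_simp
  ring

set_option maxHeartbeats 1600000 in
/-- admissible X² SSISS systems have no nonconstant periodic
solution inside the open physical triangle. -/
theorem stmt_11 (β₁ β₂ γ₁ γ₂ : ℝ) (hβ : β₁ > β₂)
    (hγ₁ : 0 ≤ γ₁) (hγ₂ : 0 ≤ γ₂) (hγ : γ₁ + γ₂ = 1)
    (A₁ A₂ B : ℝ → ℝ)
    (hA₁ : ContDiff ℝ 1 A₁) (hA₂ : ContDiff ℝ 1 A₂) (hB : ContDiff ℝ 1 B)
    (hA₁0 : ∀ I ∈ Set.Icc (0:ℝ) 1, 0 ≤ A₁ I)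
    (hA₂0 : ∀ I ∈ Set.Icc (0:ℝ) 1, 0 ≤ A₂ I) :
    ¬ ∃ (S₁ S₂ : ℝ → ℝ) (p : ℝ), 0 < p ∧
      (∀ t : ℝ, HasDerivAt S₁
        ((-β₁ * S₁ t + γ₁) * (1 - S₁ t - S₂ t)
          - A₁ (1 - S₁ t - S₂ t) * S₁ t + A₂ (1 - S₁ t - S₂ t) * S₂ t
          - (β₁ - β₂) * B (1 - S₁ t - S₂ t) * (S₁ t * S₂ t)) t) ∧
      (∀ t : ℝ, HasDerivAt S₂
        ((-β₂ * S₂ t + γ₂) * (1 - S₁ t - S₂ t)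
          - A₂ (1 - S₁ t - S₂ t) * S₂ t + A₁ (1 - S₁ t - S₂ t) * S₁ t
          - (β₂ - β₁) * B (1 - S₁ t - S₂ t) * (S₁ t * S₂ t)) t) ∧
      (∀ t : ℝ, S₁ (t + p) = S₁ t ∧ S₂ (t + p) = S₂ t) ∧
      (∀ t : ℝ, 0 < S₁ t ∧ 0 < S₂ t ∧ S₁ t + S₂ t < 1) ∧
      (∃ t₀ t₁ : ℝ, (S₁ t₀, S₂ t₀) ≠ (S₁ t₁, S₂ t₁)) := by
  rintro ⟨S₁, S₂, p, hp, hd₁, hd₂, hper, hpos, t₀, t₁, hne⟩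
  have hDpos : (0:ℝ) < β₁ - β₂ := sub_pos.2 hβ
  have hs1 : ∀ t, 0 < S₁ t := fun t => (hpos t).1
  have hs2 : ∀ t, 0 < S₂ t := fun t => (hpos t).2.1
  have hslt : ∀ t, S₁ t + S₂ t < 1 := fun t => (hpos t).2.2
  -- the basic state functions
  set nf : ℝ → ℝ := (fun t => S₁ t + S₂ t) with hnf_def
  set If : ℝ → ℝ := (fun t => 1 - S₁ t - S₂ t) with hIf_def
  set Xf : ℝ → ℝ := (fun t => β₁ * S₁ t + β₂ * S₂ t) with hXf_def
  have hnpos : ∀ t, 0 < nf t := fun t => by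
    have := hs1 t; have := hs2 t; simp only [hnf_def]; linarith
  have hnlt : ∀ t, nf t < 1 := fun t => hslt t
  have hIpos : ∀ t, 0 < If t := fun t => by
    have := hslt t; simp only [hIf_def]; linarith
  have hIlt : ∀ t, If t < 1 := fun t => by
    have := hs1 t; have := hs2 t; simp only [hIf_def]; linarith
  have hnIf : ∀ t, 1 - If t = nf t := fun t => by simp only [hIf_def, hnf_def]; ring
  -- derivatives of n and I
  have hdn : ∀ t, HasDerivAt nf ((1 - Xf t) * If t) t := by
    intro t
    have h := (hd₁ t).add (hd₂ t)
    refine h.congr_deriv ?_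
    symm
    simp only [hXf_def, hIf_def]
    linear_combination (-(1 - S₁ t - S₂ t)) * hγ
  have hdI : ∀ t, HasDerivAt If ((Xf t - 1) * If t) t := by
    intro t
    have h := ((hasDerivAt_const t (1:ℝ)).sub (hd₁ t)).sub (hd₂ t)
    refine h.congr_deriv ?_
    symm
    simp only [hXf_def, hIf_def]
    linear_combination (1 - S₁ t - S₂ t) * hγ
  have hcI : Continuous If := continuous_iff_continuousAt.2 fun t => (hdI t).continuousAt
  have hIper : ∀ t, If (t + p) = If t := fun t => by
    simp only [hIf_def, (hper t).1, (hper t).2]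
  -- at a global extremum of I we have X = 1
  have hX_of_extr : ∀ tE, (Xf tE - 1) * If tE = 0 → Xf tE = 1 := by
    intro tE h0
    rcases mul_eq_zero.1 h0 with h | h
    · linarith
    · exact absurd h (hIpos tE).ne'
  obtain ⟨tM, htM⟩ : ∃ tM, ∀ s, If s ≤ If tM := ssiss_exists_global_max hp hIper hcI
  obtain ⟨tm, htm⟩ : ∃ tm, ∀ s, If tm ≤ If s := by
    obtain ⟨tm, htm⟩ := ssiss_exists_global_max (f := fun t => -If t) hp
      (fun t => by simp [hIper t]) hcI.neg
    exact ⟨tm, fun s => by have := htm s; linarith⟩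
  have hXM : Xf tM = 1 := by
    apply hX_of_extr
    have hloc : IsLocalMax If tM := Filter.Eventually.of_forall htM
    exact hloc.hasDerivAt_eq_zero (hdI tM)
  have hXm : Xf tm = 1 := by
    apply hX_of_extr
    have hloc : IsLocalMin If tm := Filter.Eventually.of_forall htm
    exact hloc.hasDerivAt_eq_zero (hdI tm)
  have hXM' : β₁ * S₁ tM + β₂ * S₂ tM = 1 := by rw [hXf_def] at hXM; exact hXM
  have hXm' : β₁ * S₁ tm + β₂ * S₂ tm = 1 := by rw [hXf_def] at hXm; exact hXm
  have hβ₁big : 1 < β₁ * nf tM := by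
    simp only [hnf_def]
    nlinarith [mul_pos hDpos (hs2 tM)]
  have hβ₁pos : 0 < β₁ := by
    by_contra hc
    push_neg at hc
    nlinarith [mul_nonneg (neg_nonneg.2 hc) (hnpos tM).le]
  have hb1 : ∀ t, 1 < β₁ * nf t := by
    intro t
    have hIt := htM t
    have hmono : nf tM ≤ nf t := by
      simp only [hIf_def] at hIt; simp only [hnf_def]; linarith
    nlinarith [mul_le_mul_of_nonneg_left hmono hβ₁pos.le]
  have hb2 : ∀ t, β₂ * nf t < 1 := by
    intro t
    have hsm : β₂ * nf tm < 1 := by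
      simp only [hnf_def]
      nlinarith [mul_pos hDpos (hs1 tm)]
    have hIt := htm t
    have hmono : nf t ≤ nf tm := by
      simp only [hIf_def] at hIt; simp only [hnf_def]; linarith
    rcases le_or_gt β₂ 0 with h | h
    · nlinarith [mul_nonneg (neg_nonneg.2 h) (hnpos t).le]
    · nlinarith [mul_le_mul_of_nonneg_left hmono h.le]
  -- the open band J
  set J : Set ℝ := {x | 0 < x ∧ x < 1 ∧ β₂ * (1 - x) < 1 ∧ 1 < β₁ * (1 - x)} with hJ_def
  have hJopen : IsOpen J := by
    have : J = ({x : ℝ | 0 < x} ∩ {x : ℝ | x < 1}) ∩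
        ({x : ℝ | β₂ * (1 - x) < 1} ∩ {x : ℝ | 1 < β₁ * (1 - x)}) := by
      ext x; simp only [hJ_def, Set.mem_setOf_eq, Set.mem_inter_iff]; tauto
    have o1 : IsOpen {x : ℝ | 0 < x} := isOpen_lt continuous_const continuous_id
    have o2 : IsOpen {x : ℝ | x < 1} := isOpen_lt continuous_id continuous_const
    have o3 : IsOpen {x : ℝ | β₂ * (1 - x) < 1} :=
      isOpen_lt (continuous_const.mul (continuous_const.sub continuous_id)) continuous_const
    have o4 : IsOpen {x : ℝ | 1 < β₁ * (1 - x)} :=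
      isOpen_lt continuous_const (continuous_const.mul (continuous_const.sub continuous_id))
    rw [this]
    exact (o1.inter o2).inter (o3.inter o4)
  have hJmem : ∀ t, If t ∈ J := by
    intro t
    refine ⟨hIpos t, hIlt t, ?_, ?_⟩
    · rw [hnIf t]; exact hb2 t
    · rw [hnIf t]; exact hb1 t
  have hJseg : ∀ ⦃a b : ℝ⦄, a ∈ J → b ∈ J → Set.uIcc a b ⊆ J := by
    have base : ∀ a b z : ℝ, a ∈ J → b ∈ J → a ≤ z → z ≤ b → z ∈ J := by
      intro a b z ha hb h1 h2
      obtain ⟨ha1, ha2, ha3, ha4⟩ := ha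
      obtain ⟨hb1', hb2', hb3', hb4'⟩ := hb
      refine ⟨by linarith, by linarith, ?_, ?_⟩
      · rcases le_or_gt β₂ 0 with h | h
        · nlinarith
        · nlinarith [mul_nonneg h.le (by linarith : (0:ℝ) ≤ z - a)]
      · nlinarith [mul_nonneg hβ₁pos.le (by linarith : (0:ℝ) ≤ b - z)]
    intro a b ha hb z hz
    rcases Set.mem_uIcc.1 hz with ⟨h1, h2⟩ | ⟨h1, h2⟩
    · exact base a b z ha hb h1 h2
    · exact base b a z hb ha h1 h2
  -- the reference fiber point
  set sh : ℝ → ℝ := (fun x => (1 / (1 - x) - β₂) / (β₁ - β₂)) with hsh_def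
  have hshmem : ∀ x ∈ J, 0 < sh x ∧ sh x < 1 := by
    intro x hx
    obtain ⟨h1, h2, h3, h4⟩ := hx
    have h1x : (0:ℝ) < 1 - x := by linarith
    constructor
    · apply div_pos _ hDpos
      have : β₂ < 1 / (1 - x) := (lt_div_iff₀ h1x).2 (by linarith)
      linarith
    · rw [hsh_def]
      simp only
      rw [div_lt_one hDpos]
      have : 1 / (1 - x) < β₁ := (div_lt_iff₀ h1x).2 (by linarith)
      linarith
  -- the correction integrand
  set w : ℝ → ℝ := (fun x =>
    (-(β₁ - β₂) * x + (x / (1 - x)) * (γ₁ / sh x - γ₂ / (1 - sh x))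
      + A₂ x / sh x - A₁ x / (1 - sh x) - (β₁ - β₂) * (1 - x) * B x
      - (x / (1 - x)) * (Real.log (sh x) - Real.log (1 - sh x))) / (x * (1 - x))) with hw_def
  have hwc : ∀ x ∈ J, ContinuousAt w x := by
    intro x hx
    obtain ⟨h1, h2, h3, h4⟩ := hx
    have h1x : (1:ℝ) - x ≠ 0 := by linarith
    obtain ⟨hshp, hshl⟩ := hshmem x ⟨h1, h2, h3, h4⟩
    have hsh1 : (1:ℝ) - sh x ≠ 0 := by linarith
    have hcsh : ContinuousAt sh x := by
      rw [hsh_def]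
      exact ((continuousAt_const.div (continuousAt_const.sub continuousAt_id) h1x).sub
        continuousAt_const).div_const _
    have hcsh1 : ContinuousAt (fun y => 1 - sh y) x := continuousAt_const.sub hcsh
    have hlog1 : ContinuousAt (fun y => Real.log (sh y)) x :=
      ContinuousAt.comp (f := sh) (Real.continuousAt_log hshp.ne') hcsh
    have hlog2 : ContinuousAt (fun y => Real.log (1 - sh y)) x :=
      ContinuousAt.comp (f := fun y => 1 - sh y) (Real.continuousAt_log hsh1) hcsh1
    have hfrac : ContinuousAt (fun y : ℝ => y / (1 - y)) x :=
      continuousAt_id.div (continuousAt_const.sub continuousAt_id) h1x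
    have hT1 : ContinuousAt (fun y : ℝ => -(β₁ - β₂) * y) x := by
      exact continuousAt_const.mul continuousAt_id
    have hT2 : ContinuousAt (fun y => (y / (1 - y)) * (γ₁ / sh y - γ₂ / (1 - sh y))) x :=
      hfrac.mul ((continuousAt_const.div hcsh hshp.ne').sub
        (continuousAt_const.div hcsh1 hsh1))
    have hT3 : ContinuousAt (fun y => A₂ y / sh y) x :=
      (hA₂.continuous.continuousAt).div hcsh hshp.ne'
    have hT4 : ContinuousAt (fun y => A₁ y / (1 - sh y)) x :=
      (hA₁.continuous.continuousAt).div hcsh1 hsh1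
    have hT5 : ContinuousAt (fun y : ℝ => (β₁ - β₂) * (1 - y) * B y) x :=
      (continuousAt_const.mul (continuousAt_const.sub continuousAt_id)).mul
        hB.continuous.continuousAt
    have hT6 : ContinuousAt (fun y => (y / (1 - y)) * (Real.log (sh y) - Real.log (1 - sh y))) x :=
      hfrac.mul (hlog1.sub hlog2)
    rw [hw_def]
    exact (((((hT1.add hT2).add hT3).sub hT4).sub hT5).sub hT6).div
      (continuousAt_id.mul (continuousAt_const.sub continuousAt_id))
      (mul_ne_zero h1.ne' h1x)
  -- the potential
  set Ψ : ℝ → ℝ := (fun x => ∫ s in (If 0)..x, w s) with hΨ_def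
  have hΨd : ∀ x ∈ J, HasDerivAt Ψ (w x) x := by
    intro x hx
    have hcont : ContinuousOn w J := fun y hy => (hwc y hy).continuousWithinAt
    have hint : IntervalIntegrable w MeasureTheory.volume (If 0) x :=
      (hcont.mono (hJseg (hJmem 0) hx)).intervalIntegrable
    exact intervalIntegral.integral_hasDerivAt_right hint
      (hcont.stronglyMeasurableAtFilter hJopen x hx) (hwc x hx)
  -- the Z function and its derivative (simplified form)
  set Z : ℝ → ℝ := (fun t => Real.log (S₁ t) - Real.log (S₂ t)) with hZ_def
  set hv : ℝ → ℝ := (fun t => -(β₁ - β₂) * If t + If t * (γ₁ / S₁ t - γ₂ / S₂ t)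
      + nf t * (A₂ (If t) / S₁ t - A₁ (If t) / S₂ t)
      - (β₁ - β₂) * B (If t) * nf t) with hhv_def
  have hdZ : ∀ t, HasDerivAt Z (hv t) t := by
    intro t
    have h := ((hd₁ t).log (hs1 t).ne').sub ((hd₂ t).log (hs2 t).ne')
    refine h.congr_deriv ?_
    symm
    simp only [hhv_def, hIf_def, hnf_def]
    exact (ssiss_GZ β₁ β₂ γ₁ γ₂ (A₁ (1 - S₁ t - S₂ t)) (A₂ (1 - S₁ t - S₂ t))
      (B (1 - S₁ t - S₂ t)) (S₁ t) (S₂ t) (hs1 t).ne' (hs2 t).ne').symm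
  -- the Lyapunov function
  set E : ℝ → ℝ := (fun t => β₂ * Z t + (β₁ - β₂) * Real.log (1 + Real.exp (Z t))
      - Z t / nf t - Ψ (If t)) with hE_def
  -- target derivative
  set Df : ℝ → ℝ := (fun t =>
    (β₁ - β₂) * ((S₁ t / nf t - sh (If t)) *
      ((If t / nf t * (γ₁ / (S₁ t / nf t) - γ₂ / (S₂ t / nf t))
          + A₂ (If t) / (S₁ t / nf t) - A₁ (If t) / (S₂ t / nf t)
          - If t / nf t * (Real.log (S₁ t / nf t) - Real.log (S₂ t / nf t)))
        - (If t / nf t * (γ₁ / sh (If t) - γ₂ / (1 - sh (If t)))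
          + A₂ (If t) / sh (If t) - A₁ (If t) / (1 - sh (If t))
          - If t / nf t * (Real.log (sh (If t)) - Real.log (1 - sh (If t))))))) with hDf_def
  have hdE : ∀ t, HasDerivAt E (Df t) t := by
    intro t
    have h1e : (0:ℝ) < 1 + Real.exp (Z t) := by positivity
    have hPsi : HasDerivAt (fun s => Ψ (If s)) (w (If t) * ((Xf t - 1) * If t)) t := by
      simpa [Function.comp_def] using (hΨd (If t) (hJmem t)).comp t (hdI t)
    have hmain := ((((hdZ t).const_mul β₂).add
        ((((hdZ t).exp.const_add 1).log h1e.ne').const_mul (β₁ - β₂))).sub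
        ((hdZ t).div (hdn t) (hnpos t).ne')).sub hPsi
    refine hmain.congr_deriv ?_
    symm
    have hs1t := (hs1 t).ne'
    have hs2t := (hs2 t).ne'
    have hnt : S₁ t + S₂ t ≠ 0 := by
      have := hnpos t; simp only [hnf_def] at this; exact this.ne'
    have hnt2 : S₂ t + S₁ t ≠ 0 := by
      intro h; exact hnt (by linarith)
    have hit : (1:ℝ) - S₁ t - S₂ t ≠ 0 := by
      have := hIpos t; simp only [hIf_def] at this; exact this.ne'
    set τ : ℝ := sh (1 - S₁ t - S₂ t) with hτdef
    have hτmem := hshmem (If t) (hJmem t)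
    have hτpos : 0 < τ := hτmem.1
    have hτlt : τ < 1 := hτmem.2
    have hτ0 : τ ≠ 0 := hτpos.ne'
    have hτ1 : (1:ℝ) - τ ≠ 0 := by linarith
    have hτval : τ = (1 - β₂ * (S₁ t + S₂ t)) / ((β₁ - β₂) * (S₁ t + S₂ t)) := by
      rw [hτdef]
      simp only [hsh_def]
      rw [show (1:ℝ) - (1 - S₁ t - S₂ t) = S₁ t + S₂ t by ring]
      rw [div_eq_div_iff hDpos.ne' (by positivity : ((β₁ - β₂) * (S₁ t + S₂ t)) ≠ 0)]
      field_simp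
    set N : ℝ := -(β₁ - β₂) * (1 - S₁ t - S₂ t)
        + ((1 - S₁ t - S₂ t) / (S₁ t + S₂ t)) * (γ₁ / τ - γ₂ / (1 - τ))
        + A₂ (1 - S₁ t - S₂ t) / τ - A₁ (1 - S₁ t - S₂ t) / (1 - τ)
        - (β₁ - β₂) * (S₁ t + S₂ t) * B (1 - S₁ t - S₂ t)
        - ((1 - S₁ t - S₂ t) / (S₁ t + S₂ t)) * (Real.log τ - Real.log (1 - τ)) with hNdef
    have hez : Real.exp (Z t) = S₁ t / S₂ t := by
      rw [hZ_def]
      simp only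
      rw [Real.exp_sub, Real.exp_log (hs1 t), Real.exp_log (hs2 t)]
    have hXv : Xf t = β₁ * S₁ t + β₂ * S₂ t := by rw [hXf_def]
    have hnv : nf t = S₁ t + S₂ t := by rw [hnf_def]
    have hIv : If t = 1 - S₁ t - S₂ t := by rw [hIf_def]
    have hwv : w (1 - S₁ t - S₂ t) = N / ((1 - S₁ t - S₂ t) * (S₁ t + S₂ t)) := by
      rw [hNdef]
      simp only [hw_def]
      rw [← hτdef]
      rw [show (1:ℝ) - (1 - S₁ t - S₂ t) = S₁ t + S₂ t by ring]
    have hG1 : ∀ H Nv : ℝ,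
        β₂ * H + (β₁ - β₂) * (S₁ t / S₂ t * H / (1 + S₁ t / S₂ t))
          - (H * (S₁ t + S₂ t) - Z t * ((1 - (β₁ * S₁ t + β₂ * S₂ t)) * (1 - S₁ t - S₂ t)))
              / (S₁ t + S₂ t) ^ 2
          - Nv / ((1 - S₁ t - S₂ t) * (S₁ t + S₂ t))
              * ((β₁ * S₁ t + β₂ * S₂ t - 1) * (1 - S₁ t - S₂ t))
        = (β₂ + (β₁ - β₂) * (S₁ t / (S₁ t + S₂ t)) - 1 / (S₁ t + S₂ t))
            * (H - ((1 - S₁ t - S₂ t) / (S₁ t + S₂ t)) * Z t - Nv) :=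
      ssiss_G1 (S₁ t) (S₂ t) β₁ β₂ (Z t) hs1t hs2t hnt hnt2 hit
    have hG2 : β₂ + (β₁ - β₂) * (S₁ t / (S₁ t + S₂ t)) - 1 / (S₁ t + S₂ t)
        = (β₁ - β₂) * (S₁ t / (S₁ t + S₂ t) - τ) := by
      rw [hτval]
      exact ssiss_G2 (S₁ t) (S₂ t) β₁ β₂ hnt hDpos.ne'
    rw [hez, hXv, hnv, hIv, hwv, hG1 (hv t) N, hG2]
    simp only [hDf_def, hIf_def, hnf_def]
    rw [← hτdef]
    rw [mul_assoc]
    congr 2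
    simp only [hhv_def, hNdef, hZ_def, hIf_def, hnf_def]
    rw [Real.log_div hs1t hnt, Real.log_div hs2t hnt]
    exact ssiss_G3 (S₁ t) (S₂ t) β₁ β₂ γ₁ γ₂ (A₁ (1 - S₁ t - S₂ t)) (A₂ (1 - S₁ t - S₂ t))
      (B (1 - S₁ t - S₂ t)) (Real.log (S₁ t)) (Real.log (S₂ t)) (Real.log (S₁ t + S₂ t))
      (Real.log τ) (Real.log (1 - τ)) τ hs1t hs2t hnt hit hτ0 hτ1
  -- Df is strictly negative off the locus σ = sh(I), and nonpositive everywhere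
  have hτf : ∀ t, 0 < sh (If t) ∧ sh (If t) < 1 := fun t => hshmem (If t) (hJmem t)
  have hxy : ∀ t, S₁ t / nf t + S₂ t / nf t = 1 := fun t => by
    rw [← add_div, div_self (hnpos t).ne']
  have hkey : ∀ t, S₁ t / nf t ≠ sh (If t) → Df t < 0 := by
    intro t h
    have h1 : 0 < S₁ t / nf t := div_pos (hs1 t) (hnpos t)
    have h2 : 0 < S₂ t / nf t := div_pos (hs2 t) (hnpos t)
    have hq : 0 < If t / nf t := div_pos (hIpos t) (hnpos t)
    have hIcc : If t ∈ Set.Icc (0:ℝ) 1 := ⟨(hIpos t).le, (hIlt t).le⟩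
    have hk := ssiss_keyineq γ₁ γ₂ (A₁ (If t)) (A₂ (If t)) (If t / nf t)
      (S₁ t / nf t) (S₂ t / nf t) (sh (If t)) hγ₁ hγ₂ (hA₁0 _ hIcc) (hA₂0 _ hIcc)
      hq h1 h2 (hxy t) (hτf t).1 (hτf t).2 h
    simp only [hDf_def]
    exact mul_neg_of_pos_of_neg hDpos hk
  have hDone : ∀ t, Df t ≤ 0 := by
    intro t
    by_cases h : S₁ t / nf t = sh (If t)
    · simp only [hDf_def]
      rw [h]
      simp [sub_self]
    · exact (hkey t h).le
  -- E is antitone and periodic, hence constant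
  have hdiffE : Differentiable ℝ E := fun t => (hdE t).differentiableAt
  have hanti : Antitone E := by
    apply antitone_of_deriv_nonpos hdiffE
    intro t
    rw [(hdE t).deriv]
    exact hDone t
  have hEper : ∀ t, E (t + p) = E t := by
    intro t
    simp only [hE_def, hZ_def, hnf_def, hIf_def, (hper t).1, (hper t).2]
  have hEconst := ssiss_const_of_antitone_periodic hp hEper hanti
  have hD0 : ∀ t, Df t = 0 := by
    intro t
    have h1 : deriv E t = Df t := (hdE t).deriv
    have h2 : deriv E t = 0 := by
      have hEc : E = fun _ => E 0 := funext fun s => hEconst s 0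
      rw [hEc]
      simp
    rw [h1] at h2
    exact h2
  have hsig : ∀ t, S₁ t / nf t = sh (If t) := by
    intro t
    by_contra h
    exact absurd (hD0 t) (hkey t h).ne
  -- hence X ≡ 1 and I is constant
  have hX1 : ∀ t, Xf t = 1 := by
    intro t
    have h := hsig t
    have hnt : S₁ t + S₂ t ≠ 0 := (by have := hnpos t; simp only [hnf_def] at this; exact this.ne')
    have hshv : sh (If t) = (1 - β₂ * (S₁ t + S₂ t)) / ((β₁ - β₂) * (S₁ t + S₂ t)) := by
      simp only [hsh_def, hIf_def]
      rw [show (1:ℝ) - (1 - S₁ t - S₂ t) = S₁ t + S₂ t by ring]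
      rw [div_eq_div_iff hDpos.ne' (mul_ne_zero hDpos.ne' hnt)]
      field_simp
    simp only [hnf_def] at h
    rw [hshv] at h
    have hcross := (div_eq_div_iff hnt (mul_ne_zero hDpos.ne' hnt)).1 h
    have h9 : (S₁ t + S₂ t) * ((β₁ * S₁ t + β₂ * S₂ t) - 1) = 0 := by
      linear_combination hcross
    rcases mul_eq_zero.1 h9 with h' | h'
    · exact absurd h' hnt
    · rw [hXf_def]
      simp only
      linarith
  have hIconst : ∀ a b : ℝ, If a = If b := by
    apply is_const_of_deriv_eq_zero
    · exact fun t => (hdI t).differentiableAt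
    · intro t
      rw [(hdI t).deriv, hX1 t]
      ring
  -- conclude that the solution is constant, contradiction
  have hnconst : nf t₀ = nf t₁ := by
    have := hIconst t₀ t₁
    simp only [hIf_def] at this
    simp only [hnf_def]
    linarith
  have hshconst : sh (If t₀) = sh (If t₁) := by rw [hIconst t₀ t₁]
  have hS1 : S₁ t₀ = S₁ t₁ := by
    have e0 := hsig t₀
    have e1 := hsig t₁
    have h3 : S₁ t₀ / nf t₀ = S₁ t₁ / nf t₁ := by rw [e0, e1, hshconst]
    rw [div_eq_div_iff (hnpos t₀).ne' (hnpos t₁).ne'] at h3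
    rw [hnconst] at h3
    exact mul_right_cancel₀ (hnpos t₁).ne' h3
  have hS2 : S₂ t₀ = S₂ t₁ := by
    have := hnconst
    simp only [hnf_def] at this
    linarith
  exact hne (by rw [hS1, hS2])
end

section
/- Let f₂₀ < 0 and let Z₋ ≤ Z₊, Y₋ ≤ Y₊, R₁ ≤ R₀ be reals such that the polynomial identity (x−Z₊)(x−Z₋) − (1−f₂₀)(x−Y₊)(x−Y₋) = f₂₀(x−R₀)(x−R₁) holds for all x ∈ ℝ. If moreover Y₋ ≤ Z₋ ≤ Y₊ and Y₋ ≤ R₀ ≤ Y₊, then the full ordering R₁ ≤ Y₋ ≤ Z₋ ≤ R₀ ≤ Y₊ ≤ Z₊ holds. Similarly, if f₂₀ = 0 and instead the identity (x−Z₊)(x−Z₋) − (x−Y₊)(x−Y₋) = f₁₀(x−R₀) holds for all x with some f₁₀ < 0, and Y₋ ≤ Z₋ ≤ Y₊, Y₋ ≤ R₀ ≤ Y₊, then Y₋ ≤ Z₋ ≤ R₀ ≤ Y₊ ≤ Z₊. -/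
/-!
Evaluating the identity at a root of `(x - Y₊)(x - Y₋)` or `(x - Z₊)(x - Z₋)` kills one term;
since `f < 0` and `1 - f > 0`, the sign of one remaining product then fixes the sign of the other,
and a monic quadratic with roots `a ≤ b` is nonpositive exactly on `[a, b]`. Evaluating at `Y₋`,
`Y₊` and `Z₋` places `Y₋` in `[R₁, R₀]`, `Y₊` in `[Z₋, Z₊]` and `Z₋` in `[R₁, R₀]`
(resp. `Z₋ ≤ R₀`).
-/

section RootSigns

variable {α : Type*} [Ring α] [LinearOrder α] [IsStrictOrderedRing α] {a b x : α}

theorem mul_sub_nonpos_of_mem_Icc (hx : x ∈ Set.Icc a b) : (x - a) * (x - b) ≤ 0 :=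
  mul_nonpos_of_nonneg_of_nonpos (sub_nonneg.2 hx.1) (sub_nonpos.2 hx.2)

theorem mul_sub_nonneg_of_le_of_le (hxa : x ≤ a) (hxb : x ≤ b) : 0 ≤ (x - a) * (x - b) :=
  mul_nonneg_of_nonpos_of_nonpos (sub_nonpos.2 hxa) (sub_nonpos.2 hxb)

theorem mul_sub_nonneg_of_ge_of_ge (hax : a ≤ x) (hbx : b ≤ x) : 0 ≤ (x - a) * (x - b) :=
  mul_nonneg (sub_nonneg.2 hax) (sub_nonneg.2 hbx)

theorem mem_Icc_of_mul_sub_nonpos (hab : a ≤ b) (h : (x - a) * (x - b) ≤ 0) :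
    x ∈ Set.Icc a b := by
  rcases mul_nonpos_iff.1 h with ⟨hxa, hxb⟩ | ⟨hxa, hxb⟩
  · exact ⟨sub_nonneg.1 hxa, sub_nonpos.1 hxb⟩
  · exact ⟨hab.trans (sub_nonneg.1 hxb), (sub_nonpos.1 hxa).trans hab⟩

end RootSigns

theorem zeros_ordering_of_sub_quadratic {f Zp Zm Yp Ym R₀ R₁ : ℝ} (hf : f < 0) (hZ : Zm ≤ Zp)
    (hR : R₁ ≤ R₀)
    (h : ∀ x : ℝ, (x - Zp) * (x - Zm) - (1 - f) * ((x - Yp) * (x - Ym)) =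
      f * ((x - R₀) * (x - R₁)))
    (hYmZm : Ym ≤ Zm) (hZmYp : Zm ≤ Yp) (hR₀Yp : R₀ ≤ Yp) :
    R₁ ≤ Ym ∧ Ym ≤ Zm ∧ Zm ≤ R₀ ∧ R₀ ≤ Yp ∧ Yp ≤ Zp := by
  have at_Ym : f * ((Ym - R₁) * (Ym - R₀)) ≥ 0 := by
    have := mul_sub_nonneg_of_le_of_le (hYmZm.trans hZ) hYmZm
    linarith [h Ym]
  have at_Yp : (Yp - Zm) * (Yp - Zp) ≤ 0 := by
    have := mul_nonpos_of_nonpos_of_nonneg hf.le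
      (mul_sub_nonneg_of_ge_of_ge hR₀Yp (hR.trans hR₀Yp))
    linarith [h Yp]
  have at_Zm : f * ((Zm - R₁) * (Zm - R₀)) ≥ 0 := by
    have := mul_nonpos_of_nonneg_of_nonpos (by linarith : (0 : ℝ) ≤ 1 - f)
      (mul_sub_nonpos_of_mem_Icc ⟨hYmZm, hZmYp⟩)
    linarith [h Zm]
  have hYm := mem_Icc_of_mul_sub_nonpos hR (nonpos_of_mul_nonneg_right at_Ym hf)
  have hYp := mem_Icc_of_mul_sub_nonpos hZ at_Yp
  have hZm := mem_Icc_of_mul_sub_nonpos hR (nonpos_of_mul_nonneg_right at_Zm hf)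
  exact ⟨hYm.1, hYmZm, hZm.2, hR₀Yp, hYp.2⟩

theorem zeros_ordering_of_sub_linear {f Zp Zm Yp Ym R₀ : ℝ} (hf : f < 0) (hZ : Zm ≤ Zp)
    (h : ∀ x : ℝ, (x - Zp) * (x - Zm) - (x - Yp) * (x - Ym) = f * (x - R₀))
    (hYmZm : Ym ≤ Zm) (hZmYp : Zm ≤ Yp) (hR₀Yp : R₀ ≤ Yp) :
    Ym ≤ Zm ∧ Zm ≤ R₀ ∧ R₀ ≤ Yp ∧ Yp ≤ Zp := by
  have at_Yp : (Yp - Zm) * (Yp - Zp) ≤ 0 := by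
    have := mul_nonpos_of_nonpos_of_nonneg hf.le (sub_nonneg.2 hR₀Yp)
    linarith [h Yp]
  have at_Zm : f * (Zm - R₀) ≥ 0 := by
    have := mul_sub_nonpos_of_mem_Icc ⟨hYmZm, hZmYp⟩
    linarith [h Zm]
  have hYp := mem_Icc_of_mul_sub_nonpos hZ at_Yp
  exact ⟨hYmZm, sub_nonpos.1 (nonpos_of_mul_nonneg_right at_Zm hf), hR₀Yp, hYp.2⟩

/-- ordering of the zeros `Y_±, Z_±, R_ν` (Scenarios 2 and 1b of
Lemma on the relation `p_Z - p_Y = p_R`). -/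
theorem stmt_14 :
    (∀ f₂₀ Zp Zm Yp Ym R₀ R₁ : ℝ, f₂₀ < 0 → Zm ≤ Zp → Ym ≤ Yp → R₁ ≤ R₀ →
      (∀ x : ℝ,
        (x - Zp) * (x - Zm) - (1 - f₂₀) * ((x - Yp) * (x - Ym)) =
          f₂₀ * ((x - R₀) * (x - R₁))) →
      Ym ≤ Zm → Zm ≤ Yp → Ym ≤ R₀ → R₀ ≤ Yp →
      (R₁ ≤ Ym ∧ Ym ≤ Zm ∧ Zm ≤ R₀ ∧ R₀ ≤ Yp ∧ Yp ≤ Zp)) ∧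
    (∀ f₁₀ Zp Zm Yp Ym R₀ : ℝ, f₁₀ < 0 → Zm ≤ Zp → Ym ≤ Yp →
      (∀ x : ℝ,
        (x - Zp) * (x - Zm) - (x - Yp) * (x - Ym) = f₁₀ * (x - R₀)) →
      Ym ≤ Zm → Zm ≤ Yp → Ym ≤ R₀ → R₀ ≤ Yp →
      (Ym ≤ Zm ∧ Zm ≤ R₀ ∧ R₀ ≤ Yp ∧ Yp ≤ Zp)) :=
  ⟨fun _ _ _ _ _ _ _ hf hZ _ hR h h₁ h₂ _ h₄ =>
      zeros_ordering_of_sub_quadratic hf hZ hR h h₁ h₂ h₄,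
    fun _ _ _ _ _ _ hf hZ _ h h₁ h₂ _ h₄ => zeros_ordering_of_sub_linear hf hZ h h₁ h₂ h₄⟩
end

section
/- Let f be a Model-1 RND polynomial with f₂₀ < 1 and suppose f₁₁² + 4f₀₂(1−f₂₀) ≥ 0; let Y₋ ≤ Y₊ denote the two real roots of (1−f₂₀)z² + f₁₁z − f₀₂. For β₁ > β₂ define θ₁ := (h_f(β₁,1) − h_f(β₁,0))/(β₂−β₁) and θ₂ := (h_f(β₂,1) − h_f(β₂,0))/(β₁−β₂). Then θ₁ ≥ 0 and θ₂ ≤ 0 if and only if Y₋ ≤ β₂ and β₁ ≤ Y₊. (Hence the set of e-compatible pairs is exactly {(β₁,β₂) f-compatible : Y₋ ≤ β₂ < β₁ ≤ Y₊}.) -/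
/-!
`h_f(z, 1) - h_f(z, 0)` is the `I`-coefficient of `h_f`, i.e. the quadratic
`(1 - f₂₀) z² + f₁₁ z - f₀₂ = (1 - f₂₀)(z - Y₊)(z - Y₋)`, which for `f₂₀ < 1` is
nonpositive exactly on `[Y₋, Y₊]`. The signs of the denominators `β₂ - β₁ < 0` and
`β₁ - β₂ > 0` turn `θ₁ ≥ 0` and `θ₂ ≤ 0` into "β₁, β₂ ∈ [Y₋, Y₊]", which for `β₂ < β₁`
says `Y₋ ≤ β₂` and `β₁ ≤ Y₊`.
-/

/-- Auxiliary function `h_f` of a Model-1 RND polynomial, affine in `I`. -/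
def hfModel1 (f₀₀ f₀₂ f₁₀ f₁₁ f₂₀ : ℝ) (z I : ℝ) : ℝ :=
  (f₀₀ + f₁₀ * z + f₂₀ * z ^ 2) + I * (-f₀₂ + f₁₁ * z + (1 - f₂₀) * z ^ 2)

theorem mul_sub_sub_nonpos_iff {α : Type*} [Ring α] [LinearOrder α] [IsStrictOrderedRing α]
    {a b x : α} (hab : a ≤ b) : (x - b) * (x - a) ≤ 0 ↔ x ∈ Set.Icc a b := by
  constructor
  · intro h
    rcases mul_nonpos_iff.mp h with ⟨hb, ha⟩ | ⟨hb, ha⟩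
    · exact ⟨hab.trans (sub_nonneg.mp hb), (sub_nonpos.mp ha).trans hab⟩
    · exact ⟨sub_nonneg.mp ha, sub_nonpos.mp hb⟩
  · rintro ⟨ha, hb⟩
    exact mul_nonpos_of_nonpos_of_nonneg (sub_nonpos.mpr hb) (sub_nonneg.mpr ha)

theorem hfModel1_one_sub_zero (f₀₀ f₀₂ f₁₀ f₁₁ f₂₀ z : ℝ) :
    hfModel1 f₀₀ f₀₂ f₁₀ f₁₁ f₂₀ z 1 - hfModel1 f₀₀ f₀₂ f₁₀ f₁₁ f₂₀ z 0 =
      (1 - f₂₀) * z ^ 2 + f₁₁ * z - f₀₂ := by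
  simp only [hfModel1]
  ring

theorem hfModel1_one_sub_zero_nonpos_iff {f₀₀ f₀₂ f₁₀ f₁₁ f₂₀ Ym Yp : ℝ} (h20 : f₂₀ < 1)
    (hY : Ym ≤ Yp)
    (hroots : ∀ z : ℝ,
      (1 - f₂₀) * z ^ 2 + f₁₁ * z - f₀₂ = (1 - f₂₀) * ((z - Yp) * (z - Ym)))
    (z : ℝ) :
    hfModel1 f₀₀ f₀₂ f₁₀ f₁₁ f₂₀ z 1 - hfModel1 f₀₀ f₀₂ f₁₀ f₁₁ f₂₀ z 0 ≤ 0 ↔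
      z ∈ Set.Icc Ym Yp := by
  rw [hfModel1_one_sub_zero, hroots, ← mul_zero (1 - f₂₀),
    mul_le_mul_iff_right₀ (sub_pos.mpr h20), mul_sub_sub_nonpos_iff hY]

theorem stmt_16_general (f₀₀ f₀₁ f₀₂ f₁₀ f₁₁ f₂₀ Ym Yp : ℝ)
    (h20 : f₂₀ < 1)
    (hY : Ym ≤ Yp)
    (hroots : ∀ z : ℝ,
      (1 - f₂₀) * z ^ 2 + f₁₁ * z - f₀₂ = (1 - f₂₀) * ((z - Yp) * (z - Ym))) :
    ∀ β₁ β₂ : ℝ, β₁ > β₂ →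
      ((0 ≤ (hfModel1 f₀₀ f₀₂ f₁₀ f₁₁ f₂₀ β₁ 1 -
            hfModel1 f₀₀ f₀₂ f₁₀ f₁₁ f₂₀ β₁ 0) / (β₂ - β₁) ∧
        (hfModel1 f₀₀ f₀₂ f₁₀ f₁₁ f₂₀ β₂ 1 -
            hfModel1 f₀₀ f₀₂ f₁₀ f₁₁ f₂₀ β₂ 0) / (β₁ - β₂) ≤ 0) ↔
        (Ym ≤ β₂ ∧ β₁ ≤ Yp)) ∧
      (((β₂ ≤ f₀₀ + f₀₁ + f₀₂ ∧ f₀₀ + f₀₁ + f₀₂ ≤ β₁ ∧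
          (∀ I ∈ Set.Icc (0:ℝ) 1,
            hfModel1 f₀₀ f₀₂ f₁₀ f₁₁ f₂₀ β₁ I ≤ 0 ∧
            0 ≤ hfModel1 f₀₀ f₀₂ f₁₀ f₁₁ f₂₀ β₂ I)) ∧
        0 ≤ (hfModel1 f₀₀ f₀₂ f₁₀ f₁₁ f₂₀ β₁ 1 -
            hfModel1 f₀₀ f₀₂ f₁₀ f₁₁ f₂₀ β₁ 0) / (β₂ - β₁) ∧
        (hfModel1 f₀₀ f₀₂ f₁₀ f₁₁ f₂₀ β₂ 1 -
            hfModel1 f₀₀ f₀₂ f₁₀ f₁₁ f₂₀ β₂ 0) / (β₁ - β₂) ≤ 0) ↔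
        ((β₂ ≤ f₀₀ + f₀₁ + f₀₂ ∧ f₀₀ + f₀₁ + f₀₂ ≤ β₁ ∧
          (∀ I ∈ Set.Icc (0:ℝ) 1,
            hfModel1 f₀₀ f₀₂ f₁₀ f₁₁ f₂₀ β₁ I ≤ 0 ∧
            0 ≤ hfModel1 f₀₀ f₀₂ f₁₀ f₁₁ f₂₀ β₂ I)) ∧
          Ym ≤ β₂ ∧ β₁ ≤ Yp)) := by
  intro β₁ β₂ hβ
  have hslope := hfModel1_one_sub_zero_nonpos_iff (f₀₀ := f₀₀) (f₁₀ := f₁₀) h20 hY hroots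
  have htheta : (0 ≤ (hfModel1 f₀₀ f₀₂ f₁₀ f₁₁ f₂₀ β₁ 1 -
            hfModel1 f₀₀ f₀₂ f₁₀ f₁₁ f₂₀ β₁ 0) / (β₂ - β₁) ∧
        (hfModel1 f₀₀ f₀₂ f₁₀ f₁₁ f₂₀ β₂ 1 -
            hfModel1 f₀₀ f₀₂ f₁₀ f₁₁ f₂₀ β₂ 0) / (β₁ - β₂) ≤ 0) ↔
        (Ym ≤ β₂ ∧ β₁ ≤ Yp) := by
    rw [le_div_iff_of_neg (sub_neg.mpr hβ), div_le_iff₀ (sub_pos.mpr hβ), zero_mul, zero_mul,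
      hslope, hslope, Set.mem_Icc, Set.mem_Icc]
    constructor
    · rintro ⟨⟨-, hβ₁⟩, ⟨hβ₂, -⟩⟩
      exact ⟨hβ₂, hβ₁⟩
    · rintro ⟨hβ₂, hβ₁⟩
      exact ⟨⟨by linarith, hβ₁⟩, ⟨hβ₂, by linarith⟩⟩
  exact ⟨htheta, and_congr_right fun _ => htheta⟩

/-- in Model-1 with `f₂₀ < 1`, one has `θ₁ ≥ 0 ∧ θ₂ ≤ 0` iff
`Y₋ ≤ β₂` and `β₁ ≤ Y₊`; hence the e-compatible pairs are exactly the
f-compatible pairs with `Y₋ ≤ β₂ < β₁ ≤ Y₊`. -/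
theorem stmt_16 (f₀₀ f₀₁ f₀₂ f₁₀ f₁₁ f₂₀ Ym Yp : ℝ)
    (h20 : f₂₀ < 1)
    (hdisc : 0 ≤ f₁₁ ^ 2 + 4 * f₀₂ * (1 - f₂₀))
    (hY : Ym ≤ Yp)
    (hroots : ∀ z : ℝ,
      (1 - f₂₀) * z ^ 2 + f₁₁ * z - f₀₂ = (1 - f₂₀) * ((z - Yp) * (z - Ym))) :
    ∀ β₁ β₂ : ℝ, β₁ > β₂ →
      ((0 ≤ (hfModel1 f₀₀ f₀₂ f₁₀ f₁₁ f₂₀ β₁ 1 -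
            hfModel1 f₀₀ f₀₂ f₁₀ f₁₁ f₂₀ β₁ 0) / (β₂ - β₁) ∧
        (hfModel1 f₀₀ f₀₂ f₁₀ f₁₁ f₂₀ β₂ 1 -
            hfModel1 f₀₀ f₀₂ f₁₀ f₁₁ f₂₀ β₂ 0) / (β₁ - β₂) ≤ 0) ↔
        (Ym ≤ β₂ ∧ β₁ ≤ Yp)) ∧
      (((β₂ ≤ f₀₀ + f₀₁ + f₀₂ ∧ f₀₀ + f₀₁ + f₀₂ ≤ β₁ ∧
          (∀ I ∈ Set.Icc (0:ℝ) 1,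
            hfModel1 f₀₀ f₀₂ f₁₀ f₁₁ f₂₀ β₁ I ≤ 0 ∧
            0 ≤ hfModel1 f₀₀ f₀₂ f₁₀ f₁₁ f₂₀ β₂ I)) ∧
        0 ≤ (hfModel1 f₀₀ f₀₂ f₁₀ f₁₁ f₂₀ β₁ 1 -
            hfModel1 f₀₀ f₀₂ f₁₀ f₁₁ f₂₀ β₁ 0) / (β₂ - β₁) ∧
        (hfModel1 f₀₀ f₀₂ f₁₀ f₁₁ f₂₀ β₂ 1 -
            hfModel1 f₀₀ f₀₂ f₁₀ f₁₁ f₂₀ β₂ 0) / (β₁ - β₂) ≤ 0) ↔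
        ((β₂ ≤ f₀₀ + f₀₁ + f₀₂ ∧ f₀₀ + f₀₁ + f₀₂ ≤ β₁ ∧
          (∀ I ∈ Set.Icc (0:ℝ) 1,
            hfModel1 f₀₀ f₀₂ f₁₀ f₁₁ f₂₀ β₁ I ≤ 0 ∧
            0 ≤ hfModel1 f₀₀ f₀₂ f₁₀ f₁₁ f₂₀ β₂ I)) ∧
          Ym ≤ β₂ ∧ β₁ ≤ Yp)) :=
  stmt_16_general f₀₀ f₀₁ f₀₂ f₁₀ f₁₁ f₂₀ Ym Yp h20 hY hroots
end

section
/- Let β = (β₁,β₂) and β' = (β₁',β₂') with β₁ > β₂ and β₁' > β₂', and let g be the unique 2×2 matrix with column sums equal to 1 satisfying (β₁',β₂')·g = (β₁,β₂), so det g = (β₁−β₂)/(β₁'−β₂') > 0. Set J := diag(−1,1), χ := det g, ḡ := χ·J·g⁻¹·J, and row vectors Δ_β := (−β₁²,β₂²)/(β₁−β₂), Δ_{β'} := (−β₁'²,β₂'²)/(β₁'−β₂'). Given functions A = (A₁,A₂) : ℝ → ℝ² (row-vector valued), B : ℝ → ℝ, and γ ∈ ℝ² (column vector) with γ₁+γ₂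 = 1, define A'(I) := A(I)·ḡ + (I + (1−I)B(I))·(Δ_{β'} − Δ_β·ḡ) and γ' := g·γ. Let F : ℝ² → ℝ² denote the right-hand side of the X² SSISS system with data (β₁,β₂,γ₁,γ₂,A₁,A₂,B), and F' the right-hand side with data (β₁',β₂',γ₁',γ₂',A₁',A₂',B). Then for every S ∈ ℝ² (column vector), F'(g·S) = g·F(S); i.e. g maps the X² SSISS system with data (β,A,B,γ) onto the isomorphic X² SSISS system with data (β',A',B,γ'). -/
/-- Right-hand side of the X² SSISS system with data `(β, γ, A, B)`:
`Ṡᵢ = (-βᵢSᵢ + γᵢ)I - Aᵢ(I)Sᵢ + Aⱼ(I)Sⱼ - (βᵢ - βⱼ)B(I)S₁S₂`, `I = 1 - S₁ - S₂`. -/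
def ssissF (β γ : Fin 2 → ℝ) (A : ℝ → Fin 2 → ℝ) (B : ℝ → ℝ)
    (S : Fin 2 → ℝ) : Fin 2 → ℝ :=
  fun i =>
    (-(β i) * S i + γ i) * (1 - S 0 - S 1)
      - A (1 - S 0 - S 1) i * S i + A (1 - S 0 - S 1) (i + 1) * S (i + 1)
      - (β i - β (i + 1)) * B (1 - S 0 - S 1) * (S 0 * S 1)

/-- The matrix `J = diag(-1, 1)`. -/
def Jmat : Matrix (Fin 2) (Fin 2) ℝ := !![-1, 0; 0, 1]

/-- The row vector `Δ_β = (-β₁², β₂²)/(β₁ - β₂)`. -/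
noncomputable def Δrow (β₁ β₂ : ℝ) : Fin 2 → ℝ :=
  ![-β₁ ^ 2 / (β₁ - β₂), β₂ ^ 2 / (β₁ - β₂)]

/-- Computation of `ḡ = (det g)·J g⁻¹ J` for an invertible 2×2 matrix. -/
private lemma gbar_eq (g : Matrix (Fin 2) (Fin 2) ℝ) (hdet : g.det ≠ 0) :
    g.det • (Jmat * g⁻¹ * Jmat) = !![g 1 1, g 0 1; g 1 0, g 0 0] := by
  rw [Matrix.inv_def, Matrix.adjugate_fin_two, Ring.inverse_eq_inv']
  ext i j
  fin_cases i <;> fin_cases j <;>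
    simp [Jmat, Matrix.mul_apply, Fin.sum_univ_two, Matrix.smul_apply] <;>
    field_simp

set_option maxHeartbeats 4000000

private lemma stmt_18_aux0 (β₁ β₂ β₁' β₂' : ℝ) (hβ : β₁ > β₂) (hβ' : β₁' > β₂')
    (g : Matrix (Fin 2) (Fin 2) ℝ)
    (hcol₁ : g 0 0 + g 1 0 = 1) (hcol₂ : g 0 1 + g 1 1 = 1)
    (h1 : β₁' * g 0 0 + β₂' * (1 - g 0 0) = β₁)
    (h2 : β₁' * g 0 1 + β₂' * (1 - g 0 1) = β₂)
    (A : ℝ → Fin 2 → ℝ) (B : ℝ → ℝ) (γ : Fin 2 → ℝ) (hγ : γ 0 + γ 1 = 1)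
    (S : Fin 2 → ℝ) :
      ssissF ![β₁', β₂'] (g.mulVec γ)
        (fun I => Matrix.vecMul (A I) !![g 1 1, g 0 1; g 1 0, g 0 0] +
          (I + (1 - I) * B I) •
            (Δrow β₁' β₂' - Matrix.vecMul (Δrow β₁ β₂) !![g 1 1, g 0 1; g 1 0, g 0 0]))
        B (g.mulVec S) 0
      = g.mulVec (ssissF ![β₁, β₂] γ A B S) 0 := by
  have hβ'ne : β₁' - β₂' ≠ 0 := sub_ne_zero.mpr (ne_of_gt hβ')
  have hβne : β₁ - β₂ ≠ 0 := sub_ne_zero.mpr (ne_of_gt hβ)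
  have hc : g 1 0 = 1 - g 0 0 := by linarith
  have hd : g 1 1 = 1 - g 0 1 := by linarith
  have hγ1 : γ 1 = 1 - γ 0 := by linarith
  have habne : g 0 0 - g 0 1 ≠ 0 := by
    intro h
    apply hβne
    linear_combination -h1 + h2 + (β₁' - β₂') * h
  have hne : β₁' * g 0 0 + β₂' * (1 - g 0 0) - (β₁' * g 0 1 + β₂' * (1 - g 0 1)) ≠ 0 := by
    intro h
    exact mul_ne_zero hβ'ne habne (by linear_combination h)
  obtain ⟨I0, hI0⟩ : ∃ x, 1 - S 0 - S 1 = x := ⟨_, rfl⟩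
  have hI : 1 - g.mulVec S 0 - g.mulVec S 1 = I0 := by
    rw [← hI0]
    simp only [Matrix.mulVec, dotProduct, Fin.sum_univ_two, hc, hd]
    ring
  have e1 : (0 + 1 : Fin 2) = 1 := rfl
  have e2 : (1 + 1 : Fin 2) = 0 := rfl
  simp only [ssissF, hI]
  simp only [ssissF, hI0, e1, e2, Matrix.mulVec, Matrix.vecMul, dotProduct,
    Fin.sum_univ_two, Δrow, hc, hd, hγ1, Pi.add_apply, Pi.smul_apply, Pi.sub_apply,
    smul_eq_mul, Matrix.cons_val_zero, Matrix.cons_val_one, Matrix.head_cons,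
    Matrix.cons_val', Matrix.empty_val', Matrix.cons_val_fin_one, Matrix.head_fin_const,
    Fin.isValue, Matrix.of_apply]
  generalize A I0 0 = a0
  generalize A I0 1 = a1
  generalize B I0 = bb
  rw [← hI0]
  rw [← h1, ← h2]
  rw [show β₁' * g 0 0 + β₂' * (1 - g 0 0) - (β₁' * g 0 1 + β₂' * (1 - g 0 1))
    = (β₁' - β₂') * (g 0 0 - g 0 1) by ring]
  field_simp [hne, hβ'ne]
  ring

private lemma stmt_18_aux1 (β₁ β₂ β₁' β₂' : ℝ) (hβ : β₁ > β₂) (hβ' : β₁' > β₂')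
    (g : Matrix (Fin 2) (Fin 2) ℝ)
    (hcol₁ : g 0 0 + g 1 0 = 1) (hcol₂ : g 0 1 + g 1 1 = 1)
    (h1 : β₁' * g 0 0 + β₂' * (1 - g 0 0) = β₁)
    (h2 : β₁' * g 0 1 + β₂' * (1 - g 0 1) = β₂)
    (A : ℝ → Fin 2 → ℝ) (B : ℝ → ℝ) (γ : Fin 2 → ℝ) (hγ : γ 0 + γ 1 = 1)
    (S : Fin 2 → ℝ) :
      ssissF ![β₁', β₂'] (g.mulVec γ)
        (fun I => Matrix.vecMul (A I) !![g 1 1, g 0 1; g 1 0, g 0 0] +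
          (I + (1 - I) * B I) •
            (Δrow β₁' β₂' - Matrix.vecMul (Δrow β₁ β₂) !![g 1 1, g 0 1; g 1 0, g 0 0]))
        B (g.mulVec S) 1
      = g.mulVec (ssissF ![β₁, β₂] γ A B S) 1 := by
  have hβ'ne : β₁' - β₂' ≠ 0 := sub_ne_zero.mpr (ne_of_gt hβ')
  have hβne : β₁ - β₂ ≠ 0 := sub_ne_zero.mpr (ne_of_gt hβ)
  have hc : g 1 0 = 1 - g 0 0 := by linarith
  have hd : g 1 1 = 1 - g 0 1 := by linarith
  have hγ1 : γ 1 = 1 - γ 0 := by linarith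
  have habne : g 0 0 - g 0 1 ≠ 0 := by
    intro h
    apply hβne
    linear_combination -h1 + h2 + (β₁' - β₂') * h
  have hne : β₁' * g 0 0 + β₂' * (1 - g 0 0) - (β₁' * g 0 1 + β₂' * (1 - g 0 1)) ≠ 0 := by
    intro h
    exact mul_ne_zero hβ'ne habne (by linear_combination h)
  obtain ⟨I0, hI0⟩ : ∃ x, 1 - S 0 - S 1 = x := ⟨_, rfl⟩
  have hI : 1 - g.mulVec S 0 - g.mulVec S 1 = I0 := by
    rw [← hI0]
    simp only [Matrix.mulVec, dotProduct, Fin.sum_univ_two, hc, hd]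
    ring
  have e1 : (0 + 1 : Fin 2) = 1 := rfl
  have e2 : (1 + 1 : Fin 2) = 0 := rfl
  simp only [ssissF, hI]
  simp only [ssissF, hI0, e1, e2, Matrix.mulVec, Matrix.vecMul, dotProduct,
    Fin.sum_univ_two, Δrow, hc, hd, hγ1, Pi.add_apply, Pi.smul_apply, Pi.sub_apply,
    smul_eq_mul, Matrix.cons_val_zero, Matrix.cons_val_one, Matrix.head_cons,
    Matrix.cons_val', Matrix.empty_val', Matrix.cons_val_fin_one, Matrix.head_fin_const,
    Fin.isValue, Matrix.of_apply]
  generalize A I0 0 = a0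
  generalize A I0 1 = a1
  generalize B I0 = bb
  rw [← hI0]
  rw [← h1, ← h2]
  rw [show β₁' * g 0 0 + β₂' * (1 - g 0 0) - (β₁' * g 0 1 + β₂' * (1 - g 0 1))
    = (β₁' - β₂') * (g 0 0 - g 0 1) by ring]
  field_simp [hne, hβ'ne]
  ring

/-- the symmetry `g` maps the X² SSISS system with data
`(β, A, B, γ)` onto the isomorphic X² SSISS system with data `(β', A', B, γ')`,
where `A'(I) = A(I)·ḡ + (I + (1-I)B(I))(Δ_{β'} - Δ_β·ḡ)`, `ḡ = (det g)·J g⁻¹ J`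
and `γ' = g·γ`. -/
theorem stmt_18 (β₁ β₂ β₁' β₂' : ℝ) (hβ : β₁ > β₂) (hβ' : β₁' > β₂')
    (g : Matrix (Fin 2) (Fin 2) ℝ)
    (hcol₁ : g 0 0 + g 1 0 = 1) (hcol₂ : g 0 1 + g 1 1 = 1)
    (hg : Matrix.vecMul ![β₁', β₂'] g = ![β₁, β₂])
    (A : ℝ → Fin 2 → ℝ) (B : ℝ → ℝ) (γ : Fin 2 → ℝ) (hγ : γ 0 + γ 1 = 1) :
    ∀ S : Fin 2 → ℝ,
      ssissF ![β₁', β₂'] (g.mulVec γ)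
        (fun I => Matrix.vecMul (A I) (g.det • (Jmat * g⁻¹ * Jmat)) +
          (I + (1 - I) * B I) •
            (Δrow β₁' β₂' - Matrix.vecMul (Δrow β₁ β₂) (g.det • (Jmat * g⁻¹ * Jmat))))
        B (g.mulVec S)
      = g.mulVec (ssissF ![β₁, β₂] γ A B S) := by
  intro S
  have hβ'ne : β₁' - β₂' ≠ 0 := sub_ne_zero.mpr (ne_of_gt hβ')
  have hβne : β₁ - β₂ ≠ 0 := sub_ne_zero.mpr (ne_of_gt hβ)
  have h1 : β₁' * g 0 0 + β₂' * (1 - g 0 0) = β₁ := by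
    have h := congrFun hg 0
    simp only [Matrix.vecMul, dotProduct, Fin.sum_univ_two,
      Matrix.cons_val_zero, Matrix.cons_val_one, Matrix.head_cons] at h
    have : g 1 0 = 1 - g 0 0 := by linarith
    rw [← this]; exact h
  have h2 : β₁' * g 0 1 + β₂' * (1 - g 0 1) = β₂ := by
    have h := congrFun hg 1
    simp only [Matrix.vecMul, dotProduct, Fin.sum_univ_two,
      Matrix.cons_val_zero, Matrix.cons_val_one, Matrix.head_cons] at h
    have : g 1 1 = 1 - g 0 1 := by linarith
    rw [← this]; exact h
  have habne : g 0 0 - g 0 1 ≠ 0 := by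
    intro h
    apply hβne
    linear_combination -h1 + h2 + (β₁' - β₂') * h
  have hdet : g.det ≠ 0 := by
    rw [Matrix.det_fin_two]
    have hc : g 1 0 = 1 - g 0 0 := by linarith
    have hd : g 1 1 = 1 - g 0 1 := by linarith
    rw [hc, hd]
    intro h
    exact habne (by linear_combination h)
  rw [gbar_eq g hdet]
  funext i
  fin_cases i
  · exact stmt_18_aux0 β₁ β₂ β₁' β₂' hβ hβ' g hcol₁ hcol₂ h1 h2 A B γ hγ S
  · exact stmt_18_aux1 β₁ β₂ β₁' β₂' hβ hβ' g hcol₁ hcol₂ h1 h2 A B γ hγ S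
end

section
/- Let β₁, β₂, γ₁, γ₂ ∈ ℝ, let Ω₁, Ω₂ : ℝ² → ℝ, let μ₀, μ₁, μ₂ ∈ ℝ be mortality rates and ν_{ik} (i ∈ {0,1,2}, k ∈ {0,1,2}) birth rates with ν₀₁ = ν₀₂ = 0; set ν_k := ν₀k + ν₁k + ν₂k and δ_k := ν_k − μ_k. Suppose Ŝ₀, Ŝ₁, Ŝ₂ : ℝ → ℝ are differentiable with N(t) := Ŝ₀(t)+Ŝ₁(t)+Ŝ₂(t) > 0 for all t, and with fractional variables S_k := Ŝ_k/N they satisfy, for {i,j} = {1,2}: Ŝᵢ' = (−βᵢSᵢ + γᵢ)Ŝ₀ − Ωᵢ(S₁,S₂)Ŝᵢ + Ωⱼ(S₁,S₂)Ŝⱼ − μᵢŜᵢ + Σ_{k=0}^{2} ν_{ik}Ŝ_k, and Ŝ₀' = (β₁S₁ + β₂S₂ + ν₀₀ − μ₀ − γ₁ − γ₂)Ŝ₀. Then the fractional variables satisfy, for {i,j} = {1,2}: Sᵢ' = (−β̃ᵢSᵢ + γ̃ᵢ)S₀ − Ω̃ᵢ(S₁,S₂)Sᵢ + Ω̃ⱼ(S₁,S₂)Sⱼ,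 where β̃ᵢ := βᵢ + δ₀ − δᵢ, γ̃ᵢ := γᵢ + ν_{i0}, and Ω̃ᵢ(S₁,S₂) := Ωᵢ(S₁,S₂) + ν_{ji} + δⱼSⱼ. (Thus constant per capita birth and death rates are redundant: the fractional dynamics is again an SSISS dynamics with shifted 'tilde' parameters.) -/
/-- Total population `N = Ŝ₀ + Ŝ₁ + Ŝ₂`. -/
def Ntot (V₀ V₁ V₂ : ℝ → ℝ) (t : ℝ) : ℝ := V₀ t + V₁ t + V₂ t

/-- redundancy of constant per capita birth and death rates.
`V₀, V₁, V₂` are the absolute sizes of the infectious and the two susceptible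
compartments; the fractional variables `S_k = V_k/N` again satisfy an SSISS
dynamics with shifted tilde parameters `β̃ᵢ = βᵢ + δ₀ - δᵢ`, `γ̃ᵢ = γᵢ + ν_{i0}`,
`Ω̃ᵢ = Ωᵢ + ν_{ji} + δⱼ Sⱼ`, where `δ_k = (ν₀ₖ + ν₁ₖ + ν₂ₖ) - μₖ`. -/
theorem stmt_19 (β₁ β₂ γ₁ γ₂ : ℝ) (Ω₁ Ω₂ : ℝ × ℝ → ℝ)
    (μ₀ μ₁ μ₂ ν₀₀ ν₀₁ ν₀₂ ν₁₀ ν₁₁ ν₁₂ ν₂₀ ν₂₁ ν₂₂ : ℝ)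
    (hν₀₁ : ν₀₁ = 0) (hν₀₂ : ν₀₂ = 0)
    (V₀ V₁ V₂ : ℝ → ℝ)
    (hN : ∀ t : ℝ, 0 < Ntot V₀ V₁ V₂ t)
    (hV₁ : ∀ t : ℝ, HasDerivAt V₁
      ((-β₁ * (V₁ t / Ntot V₀ V₁ V₂ t) + γ₁) * V₀ t
        - Ω₁ (V₁ t / Ntot V₀ V₁ V₂ t, V₂ t / Ntot V₀ V₁ V₂ t) * V₁ t
        + Ω₂ (V₁ t / Ntot V₀ V₁ V₂ t, V₂ t / Ntot V₀ V₁ V₂ t) * V₂ t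
        - μ₁ * V₁ t + (ν₁₀ * V₀ t + ν₁₁ * V₁ t + ν₁₂ * V₂ t)) t)
    (hV₂ : ∀ t : ℝ, HasDerivAt V₂
      ((-β₂ * (V₂ t / Ntot V₀ V₁ V₂ t) + γ₂) * V₀ t
        - Ω₂ (V₁ t / Ntot V₀ V₁ V₂ t, V₂ t / Ntot V₀ V₁ V₂ t) * V₂ t
        + Ω₁ (V₁ t / Ntot V₀ V₁ V₂ t, V₂ t / Ntot V₀ V₁ V₂ t) * V₁ t
        - μ₂ * V₂ t + (ν₂₀ * V₀ t + ν₂₁ * V₁ t + ν₂₂ * V₂ t)) t)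
    (hV₀ : ∀ t : ℝ, HasDerivAt V₀
      ((β₁ * (V₁ t / Ntot V₀ V₁ V₂ t) + β₂ * (V₂ t / Ntot V₀ V₁ V₂ t)
        + ν₀₀ - μ₀ - γ₁ - γ₂) * V₀ t) t) :
    ∀ t : ℝ,
      HasDerivAt (fun s => V₁ s / Ntot V₀ V₁ V₂ s)
        ((-(β₁ + ((ν₀₀ + ν₁₀ + ν₂₀) - μ₀) - ((ν₀₁ + ν₁₁ + ν₂₁) - μ₁)) *
              (V₁ t / Ntot V₀ V₁ V₂ t) + (γ₁ + ν₁₀)) * (V₀ t / Ntot V₀ V₁ V₂ t)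
          - (Ω₁ (V₁ t / Ntot V₀ V₁ V₂ t, V₂ t / Ntot V₀ V₁ V₂ t) + ν₂₁
              + ((ν₀₂ + ν₁₂ + ν₂₂) - μ₂) * (V₂ t / Ntot V₀ V₁ V₂ t)) *
            (V₁ t / Ntot V₀ V₁ V₂ t)
          + (Ω₂ (V₁ t / Ntot V₀ V₁ V₂ t, V₂ t / Ntot V₀ V₁ V₂ t) + ν₁₂
              + ((ν₀₁ + ν₁₁ + ν₂₁) - μ₁) * (V₁ t / Ntot V₀ V₁ V₂ t)) *
            (V₂ t / Ntot V₀ V₁ V₂ t)) t ∧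
      HasDerivAt (fun s => V₂ s / Ntot V₀ V₁ V₂ s)
        ((-(β₂ + ((ν₀₀ + ν₁₀ + ν₂₀) - μ₀) - ((ν₀₂ + ν₁₂ + ν₂₂) - μ₂)) *
              (V₂ t / Ntot V₀ V₁ V₂ t) + (γ₂ + ν₂₀)) * (V₀ t / Ntot V₀ V₁ V₂ t)
          - (Ω₂ (V₁ t / Ntot V₀ V₁ V₂ t, V₂ t / Ntot V₀ V₁ V₂ t) + ν₁₂
              + ((ν₀₁ + ν₁₁ + ν₂₁) - μ₁) * (V₁ t / Ntot V₀ V₁ V₂ t)) *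
            (V₂ t / Ntot V₀ V₁ V₂ t)
          + (Ω₁ (V₁ t / Ntot V₀ V₁ V₂ t, V₂ t / Ntot V₀ V₁ V₂ t) + ν₂₁
              + ((ν₀₂ + ν₁₂ + ν₂₂) - μ₂) * (V₂ t / Ntot V₀ V₁ V₂ t)) *
            (V₁ t / Ntot V₀ V₁ V₂ t)) t := by
  subst hν₀₁ hν₀₂
  intro t
  have hNne : Ntot V₀ V₁ V₂ t ≠ 0 := ne_of_gt (hN t)
  have hNd : HasDerivAt (Ntot V₀ V₁ V₂)
      (((β₁ * (V₁ t / Ntot V₀ V₁ V₂ t) + β₂ * (V₂ t / Ntot V₀ V₁ V₂ t)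
        + ν₀₀ - μ₀ - γ₁ - γ₂) * V₀ t)
      + ((-β₁ * (V₁ t / Ntot V₀ V₁ V₂ t) + γ₁) * V₀ t
        - Ω₁ (V₁ t / Ntot V₀ V₁ V₂ t, V₂ t / Ntot V₀ V₁ V₂ t) * V₁ t
        + Ω₂ (V₁ t / Ntot V₀ V₁ V₂ t, V₂ t / Ntot V₀ V₁ V₂ t) * V₂ t
        - μ₁ * V₁ t + (ν₁₀ * V₀ t + ν₁₁ * V₁ t + ν₁₂ * V₂ t))
      + ((-β₂ * (V₂ t / Ntot V₀ V₁ V₂ t) + γ₂) * V₀ t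
        - Ω₂ (V₁ t / Ntot V₀ V₁ V₂ t, V₂ t / Ntot V₀ V₁ V₂ t) * V₂ t
        + Ω₁ (V₁ t / Ntot V₀ V₁ V₂ t, V₂ t / Ntot V₀ V₁ V₂ t) * V₁ t
        - μ₂ * V₂ t + (ν₂₀ * V₀ t + ν₂₁ * V₁ t + ν₂₂ * V₂ t))) t :=
    ((hV₀ t).add (hV₁ t)).add (hV₂ t)
  have h1 := (hV₁ t).div hNd hNne
  have h2 := (hV₂ t).div hNd hNne
  have hn : V₀ t + V₁ t + V₂ t = Ntot V₀ V₁ V₂ t := rfl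
  constructor
  · refine h1.congr_deriv ?_
    set n := Ntot V₀ V₁ V₂ t
    set w₁ := Ω₁ (V₁ t / n, V₂ t / n)
    set w₂ := Ω₂ (V₁ t / n, V₂ t / n)
    have hv0 : V₀ t = n - V₁ t - V₂ t := by linarith [hn]
    rw [hv0]
    field_simp
    ring
  · refine h2.congr_deriv ?_
    set n := Ntot V₀ V₁ V₂ t
    set w₁ := Ω₁ (V₁ t / n, V₂ t / n)
    set w₂ := Ω₂ (V₁ t / n, V₂ t / n)
    have hv0 : V₀ t = n - V₁ t - V₂ t := by linarith [hn]
    rw [hv0]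
    field_simp
    ring
end
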